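/- arXiv:0707.1552 — 13 statements merged into one kernel-verified Lean document; each statement's English description precedes it below -/
import Mathlib

section
/- Let K be a field of characteristic p > 0 and f₁, f₂ ∈ K[x] \ K[x^p] nonconstant polynomials. If f₁ and f₂ have a common composite, then they have a common composite which is not in K[x^p]. -/
/-!
Since `f₁, f₂ ∉ K[x^p]` have nonzero derivative, a composite `g ∘ fᵢ` lies in `K[x^p]` iff `g`
does. Over a perfect extension `L` of `K`, if `g₁ ∘ f₁ = g₂ ∘ f₂` with `g₁, g₂ ∈ L[x^p]`, taking
`p`-th roots of the coefficients gives a common composite of `p` times smaller degree, because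
`(expand u) ∘ F = ((u^{1/p}) ∘ F)^p`; iterating yields a common composite `A ∘ f₁ = B ∘ f₂` with
`A' ≠ 0`. Applying to all coefficients a `K`-linear functional `L → K` that does not vanish on a
coefficient of `A'` brings this back to `K[x]` and keeps the derivative nonzero.
-/

namespace Polynomial

section MapLinear

variable {R A : Type*} [CommSemiring R] [CommSemiring A] [Algebra R A]

noncomputable def mapLinear (π : A →ₗ[R] R) : A[X] →ₗ[R] R[X] :=
  lsum fun n => monomial n ∘ₗ π

@[simp]
lemma coeff_mapLinear (π : A →ₗ[R] R) (u : A[X]) (n : ℕ) :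
    (mapLinear π u).coeff n = π (u.coeff n) := by
  simp only [mapLinear, lsum_apply, LinearMap.coe_comp, Function.comp_apply, sum_def,
    finsetSum_coeff, coeff_monomial]
  rw [Finset.sum_ite_eq']
  split_ifs with h
  · rfl
  · rw [notMem_support_iff.mp h, map_zero]

lemma mapLinear_C_mul_map (π : A →ₗ[R] R) (a : A) (w : R[X]) :
    mapLinear π (C a * w.map (algebraMap R A)) = C (π a) * w := by
  ext n
  rw [coeff_mapLinear, coeff_C_mul, coeff_C_mul, coeff_map, ← Algebra.commutes,
    ← Algebra.smul_def, map_smul, smul_eq_mul, mul_comm]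

lemma mapLinear_comp_map (π : A →ₗ[R] R) (u : A[X]) (f : R[X]) :
    mapLinear π (u.comp (f.map (algebraMap R A))) = (mapLinear π u).comp f := by
  induction u using Polynomial.induction_on' with
  | add u v hu hv => rw [add_comp, map_add, map_add, add_comp, hu, hv]
  | monomial n a =>
    have hmonomial : mapLinear π (monomial n a) = C (π a) * X ^ n := by
      ext m
      simp only [coeff_mapLinear, coeff_monomial, coeff_C_mul_X_pow]
      split_ifs <;> simp_all
    rw [← C_mul_X_pow_eq_monomial, mul_comp, C_comp, X_pow_comp, ← Polynomial.map_pow,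
      mapLinear_C_mul_map, C_mul_X_pow_eq_monomial, hmonomial, mul_comp, C_comp, X_pow_comp]

lemma derivative_mapLinear (π : A →ₗ[R] R) (u : A[X]) :
    derivative (mapLinear π u) = mapLinear π (derivative u) := by
  ext n
  rw [coeff_derivative, coeff_mapLinear, coeff_mapLinear, coeff_derivative, ← Nat.cast_succ,
    ← Nat.cast_succ, ← nsmul_eq_mul', ← nsmul_eq_mul', map_nsmul]

end MapLinear

section CharP

variable {R : Type*} [CommSemiring R] [NoZeroDivisors R] {p : ℕ}

lemma derivative_comp_eq_zero_iff {F : R[X]} (hF : derivative F ≠ 0) (A : R[X]) :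
    derivative (A.comp F) = 0 ↔ derivative A = 0 := by
  rw [derivative_comp, mul_eq_zero, or_iff_right hF, comp_eq_zero_iff]
  refine ⟨?_, Or.inl⟩
  rintro (h | ⟨-, hC⟩)
  · exact h
  · exact absurd (by rw [hC, derivative_C]) hF

lemma exists_expand_eq_iff_derivative_eq_zero [CharP R p] (hp : p ≠ 0) {f : R[X]} :
    (∃ g, expand R p g = f) ↔ derivative f = 0 := by
  refine ⟨?_, fun h => ⟨contract p f, expand_contract p h hp⟩⟩
  rintro ⟨g, rfl⟩
  rw [derivative_expand, CharP.cast_eq_zero, zero_mul, mul_zero]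

end CharP

lemma comp_pow_expChar {R : Type*} [CommSemiring R] {p : ℕ} [ExpChar R p] (v F : R[X]) :
    v.comp F ^ p = (expand R p (map (frobenius R p) v)).comp F := by
  rw [← map_frobenius_expand, expand_eq_comp_X_pow, expand_eq_comp_X_pow, comp_assoc, comp_assoc,
    ← expand_eq_comp_X_pow, map_comp, map_frobenius_expand, X_pow_comp]

section Perfect

variable {L : Type*} [Field L] {p : ℕ} [ExpChar L p] [PerfectRing L p]

lemma comp_eq_comp_of_expand_comp_eq_expand_comp {u₁ u₂ F₁ F₂ : L[X]}
    (h : (expand L p u₁).comp F₁ = (expand L p u₂).comp F₂) :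
    (map (frobeniusEquiv L p).symm u₁).comp F₁ = (map (frobeniusEquiv L p).symm u₂).comp F₂ := by
  apply frobenius_inj L[X] p
  simp only [frobenius_def, comp_pow_expChar, map_map, frobenius_comp_frobeniusEquiv_symm, map_id, h]

theorem exists_comp_eq_comp_derivative_ne_zero (hp : 1 < p) {F₁ F₂ : L[X]}
    (hF₁ : derivative F₁ ≠ 0) (hF₂ : derivative F₂ ≠ 0) {A B : L[X]} (hA : A.natDegree ≠ 0)
    (h : A.comp F₁ = B.comp F₂) :
    ∃ A' B' : L[X], derivative A' ≠ 0 ∧ A'.comp F₁ = B'.comp F₂ := by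
  induction hn : A.natDegree using Nat.strong_induction_on generalizing A B with
  | _ n ih =>
  by_cases hA' : derivative A = 0
  swap
  · exact ⟨A, B, hA', h⟩
  have hB' : derivative B = 0 := by
    rwa [← derivative_comp_eq_zero_iff hF₂, ← h, derivative_comp_eq_zero_iff hF₁]
  rw [← expand_contract' p hA', ← expand_contract' p hB'] at h
  have hdeg : (map ((frobeniusEquiv L p).symm : L →+* L) (contract p A)).natDegree * p = n := by
    rw [natDegree_map, ← natDegree_expand, expand_contract' p hA', hn]
  have hd0 : (map ((frobeniusEquiv L p).symm : L →+* L) (contract p A)).natDegree ≠ 0 :=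
    fun h0 => hA (by rw [hn, ← hdeg, h0, zero_mul])
  exact ih _ (hdeg ▸ lt_mul_of_one_lt_right (Nat.pos_of_ne_zero hd0) hp) hd0
    (comp_eq_comp_of_expand_comp_eq_expand_comp h) rfl

end Perfect

theorem exists_comp_eq_comp_derivative_ne_zero_of_map {K L : Type*} [CommSemiring K]
    [CommSemiring L] [Algebra K L] [Module.Projective K L] {f₁ f₂ : K[X]} {A B : L[X]}
    (hA : derivative A ≠ 0)
    (h : A.comp (f₁.map (algebraMap K L)) = B.comp (f₂.map (algebraMap K L))) :
    ∃ g₁ g₂ : K[X], derivative g₁ ≠ 0 ∧ g₁.comp f₁ = g₂.comp f₂ := by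
  obtain ⟨π, hπ⟩ := Module.Projective.exists_dual_ne_zero K (leadingCoeff_ne_zero.mpr hA)
  refine ⟨mapLinear π A, mapLinear π B, ?_, ?_⟩
  · rw [derivative_mapLinear]
    exact fun h0 => hπ (by rw [leadingCoeff, ← coeff_mapLinear, h0, coeff_zero])
  · rw [← mapLinear_comp_map, ← mapLinear_comp_map, h]

lemma natDegree_ne_zero_of_derivative_ne_zero {R : Type*} [Semiring R] {f : R[X]}
    (hf : derivative f ≠ 0) : f.natDegree ≠ 0 :=
  mt derivative_of_natDegree_zero hf

end Polynomial

open Polynomial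

theorem stmt_1_general (K : Type*) [Field K] (p : ℕ) (hp : p.Prime) [CharP K p]
    (f₁ f₂ : K[X])
    (hs₁ : ¬ ∃ g : K[X], Polynomial.expand K p g = f₁)
    (hs₂ : ¬ ∃ g : K[X], Polynomial.expand K p g = f₂)
    (h : ∃ g₁ g₂ : K[X], g₁.natDegree ≠ 0 ∧ g₂.natDegree ≠ 0 ∧ g₁.comp f₁ = g₂.comp f₂) :
    ∃ g₁ g₂ : K[X], g₁.natDegree ≠ 0 ∧ g₂.natDegree ≠ 0 ∧ g₁.comp f₁ = g₂.comp f₂ ∧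
      ¬ ∃ g : K[X], Polynomial.expand K p g = g₁.comp f₁ := by
  obtain ⟨g₁, g₂, hg₁, -, heq⟩ := h
  have hdf₁ := (exists_expand_eq_iff_derivative_eq_zero hp.ne_zero).not.mp hs₁
  have hdf₂ := (exists_expand_eq_iff_derivative_eq_zero hp.ne_zero).not.mp hs₂
  let L := AlgebraicClosure K
  have : CharP L p := charP_of_injective_algebraMap (algebraMap K L).injective p
  have : ExpChar L p := ExpChar.prime hp
  have hdF {f : K[X]} (hf : derivative f ≠ 0) : derivative (f.map (algebraMap K L)) ≠ 0 := by
    rwa [derivative_map, Polynomial.map_ne_zero_iff (algebraMap K L).injective]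
  obtain ⟨A, B, hA, hAB⟩ := exists_comp_eq_comp_derivative_ne_zero hp.one_lt (hdF hdf₁) (hdF hdf₂)
    (A := g₁.map (algebraMap K L)) (by rwa [natDegree_map]) (by rw [← map_comp, ← map_comp, heq])
  obtain ⟨G₁, G₂, hG₁, hG⟩ := exists_comp_eq_comp_derivative_ne_zero_of_map hA hAB
  have hcomp : derivative (G₁.comp f₁) ≠ 0 := (derivative_comp_eq_zero_iff hdf₁ G₁).not.mpr hG₁
  refine ⟨G₁, G₂, natDegree_ne_zero_of_derivative_ne_zero hG₁, ?_, hG,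
    (exists_expand_eq_iff_derivative_eq_zero hp.ne_zero).not.mpr hcomp⟩
  rw [hG] at hcomp
  exact natDegree_ne_zero_of_derivative_ne_zero ((derivative_comp_eq_zero_iff hdf₂ G₂).not.mp hcomp)

theorem stmt_1 (K : Type*) [Field K] (p : ℕ) (hp : p.Prime) [CharP K p]
    (f₁ f₂ : K[X]) (hf₁ : f₁.natDegree ≠ 0) (hf₂ : f₂.natDegree ≠ 0)
    (hs₁ : ¬ ∃ g : K[X], Polynomial.expand K p g = f₁)
    (hs₂ : ¬ ∃ g : K[X], Polynomial.expand K p g = f₂)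
    (h : ∃ g₁ g₂ : K[X], g₁.natDegree ≠ 0 ∧ g₂.natDegree ≠ 0 ∧ g₁.comp f₁ = g₂.comp f₂) :
    ∃ g₁ g₂ : K[X], g₁.natDegree ≠ 0 ∧ g₂.natDegree ≠ 0 ∧ g₁.comp f₁ = g₂.comp f₂ ∧
      ¬ ∃ g : K[X], Polynomial.expand K p g = g₁.comp f₁ :=
  stmt_1_general K p hp f₁ f₂ hs₁ hs₂ h
end

section
/- Let K be a field and f₁, f₂ ∈ K[x] nonconstant. If the intersection of the rational function subfields K(f₁) ∩ K(f₂) properly contains K, then f₁ and f₂ have a common polynomial composite h, and moreover K(f₁) ∩ K(f₂) = K(h) and K[f₁] ∩ K[f₂] = K[h] for any minimal-degree common composite h. -/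
/-!
Write `L = K(f₁) ∩ K(f₂)` inside `K(x)`. Any element of `K(f)` is, in lowest terms, a quotient of
polynomials in `f`, so the numerator and denominator of an element of `L ∖ K` lie in `L`, and one
of them is a nonconstant polynomial `w`, which we may take monic. Hence `x` is algebraic over `L`,
and its minimal polynomial divides `w(T) - w(x)`, which is monic in `T` over `K[x]`; by Gauss's
lemma the minimal polynomial is some `M ∈ K[x][T]`. Let `A` be a coefficient of `M` of largest
`x`-degree `d`. Then `A ∈ L` and `M ∣ A(T) - A(x)`; since `A(T) - A(x)` is antisymmetric in `x ↔ T`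
and `M` has `x`-degree `d = deg_T (A(T) - A(x))`, the cofactor is a constant, so `[K(x) : L] =
deg_T M = deg A`. As `K(f) ∩ K[x] = K[f]`, `A` is a common composite of `f₁` and `f₂`. For a common
composite `h` of minimal degree, `K(h) ⊆ L` and `[K(x) : K(h)] = deg h ≤ deg A = [K(x) : L]`, so
`K(h) = L`; intersecting with `K[x]` gives `K[f₁] ∩ K[f₂] = K[h]`.
-/

open Polynomial IntermediateField

namespace Polynomial

lemma mem_adjoin_singleton_iff_exists_comp {R : Type*} [CommSemiring R] {f p : R[X]} :
    p ∈ Algebra.adjoin R {f} ↔ ∃ g : R[X], g.comp f = p := by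
  simp [Algebra.adjoin_singleton_eq_range_aeval, comp_eq_aeval]

lemma Monic.eq_one_of_isUnit_comp {R : Type*} [Semiring R] [NoZeroDivisors R] {b f : R[X]}
    (hb : b.Monic) (hf : f.natDegree ≠ 0) (hbf : IsUnit (b.comp f)) : b = 1 := by
  have := natDegree_eq_zero_of_isUnit hbf
  rw [natDegree_comp, mul_eq_zero, or_iff_left hf] at this
  exact hb.natDegree_eq_zero.1 this

namespace Bivariate

lemma coeff_coeff_swap {R : Type*} [CommSemiring R] (P : R[X][Y]) (i j : ℕ) :
    ((swap P).coeff j).coeff i = (P.coeff i).coeff j := by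
  induction P using Polynomial.induction_on' with
  | add p q hp hq => simp [hp, hq]
  | monomial n a =>
    rw [swap_monomial, ← C_mul_X_pow_eq_monomial, coeff_mul_C, coeff_map, coeff_C_mul_X_pow,
      coeff_C_mul_X_pow]
    split_ifs <;> simp

lemma natDegree_coeff_le_natDegree_swap {R : Type*} [CommSemiring R] (P : R[X][Y]) (i : ℕ) :
    (P.coeff i).natDegree ≤ (swap P).natDegree := by
  refine natDegree_le_iff_coeff_eq_zero.2 fun j hj => ?_
  rw [← coeff_coeff_swap, coeff_eq_zero_of_natDegree_lt hj, coeff_zero]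

lemma exists_natDegree_coeff_eq_natDegree_swap {R : Type*} [CommSemiring R] (P : R[X][Y]) :
    ∃ i, (P.coeff i).natDegree = (swap P).natDegree := by
  by_cases hP : swap P = 0
  · exact ⟨0, by simp [(map_eq_zero_iff _ swap.injective).1 hP]⟩
  obtain ⟨i, hi⟩ : ∃ i, ((swap P).leadingCoeff).coeff i ≠ 0 := by
    by_contra! h
    exact leadingCoeff_ne_zero.2 hP (Polynomial.ext fun i => by simpa using h i)
  rw [leadingCoeff, coeff_coeff_swap] at hi
  exact ⟨i, (natDegree_coeff_le_natDegree_swap P i).antisymm (le_natDegree_of_ne_zero hi)⟩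

/-- `A.map C - C A` is `A(Y) - A(X)`; it changes sign under `swap`, so a factor `M` of it with the
same `X`-degree leaves a cofactor of `X`-degree `0`, which the `Y ^ deg A` coefficient forces to
be a unit. -/
theorem natDegree_eq_of_dvd_map_C_sub_C {K : Type*} [Field K] {M : K[X][Y]} {A : K[X]}
    (hM : M.Monic) (hA : A.natDegree ≠ 0) (hswap : (swap M).natDegree = A.natDegree)
    (hdvd : M ∣ A.map C - C A) : M.natDegree = A.natDegree := by
  set F := A.map C - C A with hF
  have hFdeg : F.natDegree = A.natDegree := by
    rw [natDegree_sub_C, natDegree_map_eq_of_injective C_injective]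
  have hFswap : swap F = -F := by rw [hF, map_sub, swap_map_C, swap_C, neg_sub]
  obtain ⟨G, hG⟩ := hdvd
  have hG0 : G ≠ 0 := by
    rintro rfl
    rw [mul_zero] at hG
    rw [hG, natDegree_zero] at hFdeg
    exact hA hFdeg.symm
  have hswapG : (swap G).natDegree = 0 := by
    have := congrArg (fun P => (swap P).natDegree) hG
    simp only [hFswap, natDegree_neg, hFdeg, map_mul] at this
    rw [natDegree_mul ((map_ne_zero_iff _ swap.injective).2 hM.ne_zero)
      ((map_ne_zero_iff _ swap.injective).2 hG0), hswap] at this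
    omega
  set g := (swap G).coeff 0
  have hGg : swap G = C g := eq_C_of_natDegree_eq_zero hswapG
  have hg : IsUnit g := by
    have hFcoeff : F.coeff A.natDegree = C A.leadingCoeff := by
      rw [hF, coeff_sub, coeff_map, coeff_C, if_neg hA, sub_zero, coeff_natDegree]
    have := congrArg (coeff · A.natDegree) (congrArg swap hG)
    simp only [hFswap, map_mul, hGg, coeff_mul_C, coeff_neg, hFcoeff] at this
    have hA0 : A ≠ 0 := by rintro rfl; exact hA natDegree_zero
    exact isUnit_of_dvd_unit ⟨-(swap M).coeff A.natDegree, by linear_combination -this⟩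
      (isUnit_C.2 (leadingCoeff_ne_zero.2 hA0).isUnit)
  have hGdeg : G.natDegree = 0 := by
    rw [← swap_swap_apply G, hGg, swap_C, natDegree_map_eq_of_injective C_injective]
    exact natDegree_eq_zero_of_isUnit hg
  rw [← hFdeg, hG, natDegree_mul hM.ne_zero hG0, hGdeg, add_zero]

end Bivariate

end Polynomial

/- Inside `namespace RatFunc` the names `C` and `X` resolve to `RatFunc.C` and `RatFunc.X`, hence
the explicit `Polynomial.C` below. -/
namespace RatFunc

variable {K : Type*} [Field K]

lemma mul_algebraMap_denom (r : RatFunc K) :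
    r * algebraMap K[X] (RatFunc K) r.denom = algebraMap K[X] (RatFunc K) r.num :=
  ((eq_div_iff (algebraMap_ne_zero r.denom_ne_zero)).1 r.num_div_denom.symm)

lemma algebraMap_comp (f g : K[X]) :
    algebraMap K[X] (RatFunc K) (g.comp f) = aeval (algebraMap K[X] (RatFunc K) f) g := by
  rw [comp_eq_aeval, aeval_algebraMap_apply]

lemma algebraMap_comp_mem_adjoin (f g : K[X]) :
    algebraMap K[X] (RatFunc K) (g.comp f) ∈ K⟮algebraMap K[X] (RatFunc K) f⟯ :=
  (mem_adjoin_simple_iff K _).2 ⟨g, 1, by simp [algebraMap_comp]⟩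

/-- `K(f)` is the image of the substitution `K(T) → K(x)`, `T ↦ f`, which exists because `f` is
transcendental; reduced fractions in `K(T)` give the coprime pair. -/
lemma exists_isCoprime_of_mem_adjoin {f : K[X]} (hf : f.natDegree ≠ 0) {r : RatFunc K}
    (hr : r ∈ K⟮algebraMap K[X] (RatFunc K) f⟯) :
    ∃ a b : K[X], IsCoprime a b ∧ b.Monic ∧
      r * algebraMap K[X] (RatFunc K) (b.comp f) = algebraMap K[X] (RatFunc K) (a.comp f) := by
  have hf₀ : f ≠ 0 := ne_zero_of_natDegree_gt (Nat.pos_of_ne_zero hf)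
  have htr : Transcendental K (algebraMap K[X] (RatFunc K) f) :=
    (transcendental_algebraMap_iff (IsFractionRing.injective K[X] (RatFunc K))).2 <|
      f.transcendental hf (mem_nonZeroDivisors_of_ne_zero (leadingCoeff_ne_zero.2 hf₀))
  set σ := liftAlgHom (aeval (algebraMap K[X] (RatFunc K) f))
    (nonZeroDivisors_le_comap_nonZeroDivisors_of_injective _ (transcendental_iff_injective.1 htr))
  have hσ (p : K[X]) :
      σ (algebraMap K[X] (RatFunc K) p) = algebraMap K[X] (RatFunc K) (p.comp f) := by
    simpa [algebraMap_comp] using liftAlgHom_apply_div (S := K) (L := RatFunc K) _ _ p 1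
  obtain ⟨q, rfl⟩ : ∃ q, σ q = r :=
    (adjoin_simple_le_iff (F := K)).2 (show _ ∈ σ.fieldRange from
      ⟨X, show σ X = _ by rw [← algebraMap_X, hσ, X_comp]⟩) hr
  refine ⟨q.num, q.denom, q.isCoprime_num_denom, q.monic_denom, ?_⟩
  rw [← hσ, ← hσ, ← map_mul, mul_algebraMap_denom]

theorem algebraMap_mem_adjoin_iff {f : K[X]} (hf : f.natDegree ≠ 0) {p : K[X]} :
    algebraMap K[X] (RatFunc K) p ∈ K⟮algebraMap K[X] (RatFunc K) f⟯ ↔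
      ∃ g : K[X], g.comp f = p := by
  refine ⟨fun hp => ?_, fun ⟨g, hg⟩ => hg ▸ algebraMap_comp_mem_adjoin f g⟩
  obtain ⟨a, b, hab, hb, hp⟩ := exists_isCoprime_of_mem_adjoin hf hp
  rw [← map_mul] at hp
  have hpab := IsFractionRing.injective K[X] (RatFunc K) hp
  have hab' : IsCoprime (a.comp f) (b.comp f) := hab.map (compRingHom f)
  have hb1 : b = 1 :=
    hb.eq_one_of_isUnit_comp hf (hab'.isUnit_of_dvd' ⟨p, by rw [← hpab, mul_comm]⟩ dvd_rfl)
  exact ⟨a, by rwa [hb1, one_comp, mul_one, eq_comm] at hpab⟩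

lemma algebraMap_denom_mem_adjoin {f : K[X]} (hf : f.natDegree ≠ 0) {r : RatFunc K}
    (hr : r ∈ K⟮algebraMap K[X] (RatFunc K) f⟯) :
    algebraMap K[X] (RatFunc K) r.denom ∈ K⟮algebraMap K[X] (RatFunc K) f⟯ := by
  obtain ⟨a, b, hab, -, hr'⟩ := exists_isCoprime_of_mem_adjoin hf hr
  have hcross : r.num * b.comp f = a.comp f * r.denom := by
    apply IsFractionRing.injective K[X] (RatFunc K)
    rw [map_mul, map_mul, ← mul_algebraMap_denom, ← hr']
    ring
  have hab' : IsCoprime (a.comp f) (b.comp f) := hab.map (compRingHom f)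
  obtain ⟨u, hu⟩ : Associated (b.comp f) r.denom := associated_of_dvd_dvd
    (hab'.symm.dvd_of_dvd_mul_left (by rw [← hcross]; exact dvd_mul_left _ _))
    (r.isCoprime_num_denom.symm.dvd_of_dvd_mul_left (by rw [hcross]; exact dvd_mul_left _ _))
  obtain ⟨c, -, hc⟩ := Polynomial.isUnit_iff.1 u.isUnit
  rw [← hu, ← hc, ← C_comp, ← mul_comp]
  exact algebraMap_comp_mem_adjoin f _

theorem exists_natDegree_ne_zero_algebraMap_mem_inf {f₁ f₂ : K[X]} (hf₁ : f₁.natDegree ≠ 0)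
    (hf₂ : f₂.natDegree ≠ 0)
    (hne : K⟮algebraMap K[X] (RatFunc K) f₁⟯ ⊓ K⟮algebraMap K[X] (RatFunc K) f₂⟯ ≠ ⊥) :
    ∃ w : K[X], w.natDegree ≠ 0 ∧ algebraMap K[X] (RatFunc K) w ∈
      K⟮algebraMap K[X] (RatFunc K) f₁⟯ ⊓ K⟮algebraMap K[X] (RatFunc K) f₂⟯ := by
  obtain ⟨r, hr, hrK⟩ := SetLike.exists_of_lt (bot_lt_iff_ne_bot.2 hne)
  have hden : algebraMap K[X] (RatFunc K) r.denom ∈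
      K⟮algebraMap K[X] (RatFunc K) f₁⟯ ⊓ K⟮algebraMap K[X] (RatFunc K) f₂⟯ :=
    ⟨algebraMap_denom_mem_adjoin hf₁ hr.1, algebraMap_denom_mem_adjoin hf₂ hr.2⟩
  have hnum : algebraMap K[X] (RatFunc K) r.num ∈
      K⟮algebraMap K[X] (RatFunc K) f₁⟯ ⊓ K⟮algebraMap K[X] (RatFunc K) f₂⟯ :=
    mul_algebraMap_denom r ▸ mul_mem hr hden
  by_contra! H
  obtain ⟨a, ha⟩ := natDegree_eq_zero.1 (not_not.1 fun h => H _ h hnum)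
  obtain ⟨b, hb⟩ := natDegree_eq_zero.1 (not_not.1 fun h => H _ h hden)
  apply hrK
  rw [← r.num_div_denom, ← ha, ← hb, algebraMap_C, algebraMap_C]
  exact div_mem (IntermediateField.algebraMap_mem _ a) (IntermediateField.algebraMap_mem _ b)

lemma finrank_adjoin_algebraMap (p : K[X]) :
    Module.finrank K⟮algebraMap K[X] (RatFunc K) p⟯ (RatFunc K) = p.natDegree := by
  rw [finrank_eq_max_natDegree, num_algebraMap, denom_algebraMap, natDegree_one, max_zero]

variable {E : IntermediateField K (RatFunc K)}

lemma finiteDimensional_of_ne_bot (hE : E ≠ ⊥) : FiniteDimensional E (RatFunc K) :=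
  have := adjoin.finiteDimensional (IntermediateField.isAlgebraic_X hE).isIntegral
  (IntermediateField.adjoinXEquiv E).toLinearEquiv.finiteDimensional

lemma finrank_eq_natDegree_minpoly_X (hE : E ≠ ⊥) :
    Module.finrank E (RatFunc K) = (minpoly E (X : RatFunc K)).natDegree := by
  rw [← (IntermediateField.adjoinXEquiv E).toLinearEquiv.finrank_eq,
    adjoin.finrank (IntermediateField.isAlgebraic_X hE).isIntegral]

lemma map_minpoly_X_dvd {A : K[X]} (hA : algebraMap K[X] (RatFunc K) A ∈ E) :
    (minpoly E (X : RatFunc K)).map (algebraMap E (RatFunc K)) ∣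
      (A.map Polynomial.C - Polynomial.C A).map (algebraMap K[X] (RatFunc K)) := by
  have hdvd := minpoly.dvd E (X : RatFunc K)
    (p := A.map (algebraMap K E) - Polynomial.C ⟨_, hA⟩) (by simp)
  convert Polynomial.map_dvd (algebraMap E (RatFunc K)) hdvd using 1
  simp [Polynomial.map_map, ← IsScalarTower.algebraMap_eq]

lemma exists_monic_map_eq_map_minpoly_X (hE : E ≠ ⊥) {w : K[X]}
    (hw : algebraMap K[X] (RatFunc K) w ∈ E) (hwd : w.natDegree ≠ 0) :
    ∃ M : K[X][X], M.Monic ∧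
      M.map (algebraMap K[X] (RatFunc K)) = (minpoly E (X : RatFunc K)).map (algebraMap E _) := by
  have hw0 : w ≠ 0 := by rintro rfl; exact hwd natDegree_zero
  set v := w * Polynomial.C w.leadingCoeff⁻¹
  have hv : v.Monic := monic_mul_leadingCoeff_inv hw0
  have hvd : v.natDegree ≠ 0 := by
    rwa [natDegree_mul_C (inv_ne_zero (leadingCoeff_ne_zero.2 hw0))]
  have hvE : algebraMap K[X] (RatFunc K) v ∈ E := by
    rw [map_mul, ← Polynomial.algebraMap_eq, ← IsScalarTower.algebraMap_apply]
    exact mul_mem hw (IntermediateField.algebraMap_mem E _)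
  have hF : (v.map Polynomial.C - Polynomial.C v).Monic :=
    (hv.map _).sub_of_left <| degree_C_le.trans_lt <| by
      rw [degree_map_eq_of_injective Polynomial.C_injective]
      exact natDegree_pos_iff_degree_pos.1 (Nat.pos_of_ne_zero hvd)
  obtain ⟨M, hM⟩ := IsIntegrallyClosed.eq_map_mul_C_of_dvd (RatFunc K) hF (map_minpoly_X_dvd hvE)
  have hmin := (minpoly.monic (IntermediateField.isAlgebraic_X hE).isIntegral).map
    (algebraMap E (RatFunc K))
  rw [hmin.leadingCoeff, Polynomial.C_1, mul_one] at hM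
  exact ⟨M, monic_of_injective (IsFractionRing.injective K[X] (RatFunc K)) (hM ▸ hmin), hM⟩

open Polynomial.Bivariate

lemma natDegree_swap_ne_zero_of_eval_X_eq_zero {M : K[X][X]} (hM : M ≠ 0)
    (hX : (M.map (algebraMap K[X] (RatFunc K))).eval X = 0) : (swap M).natDegree ≠ 0 := by
  intro h
  obtain ⟨q, hq⟩ : ∃ q, swap M = Polynomial.C q := ⟨_, eq_C_of_natDegree_eq_zero h⟩
  have hMq : M = q.map Polynomial.C := by rw [← swap_swap_apply M, hq, swap_C]
  rw [hMq, Polynomial.map_map, ← Polynomial.algebraMap_eq, ← IsScalarTower.algebraMap_eq,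
    eval_map_algebraMap, aeval_X_left_eq_algebraMap,
    map_eq_zero_iff _ (IsFractionRing.injective _ _)] at hX
  exact hM (by rw [hMq, hX, Polynomial.map_zero])

theorem exists_algebraMap_mem_natDegree_eq_finrank (hE : E ≠ ⊥) {w : K[X]}
    (hw : algebraMap K[X] (RatFunc K) w ∈ E) (hwd : w.natDegree ≠ 0) :
    ∃ A : K[X], algebraMap K[X] (RatFunc K) A ∈ E ∧
      A.natDegree = Module.finrank E (RatFunc K) := by
  obtain ⟨M, hM, hMmap⟩ := exists_monic_map_eq_map_minpoly_X hE hw hwd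
  obtain ⟨i, hi⟩ := exists_natDegree_coeff_eq_natDegree_swap M
  have hAE : algebraMap K[X] (RatFunc K) (M.coeff i) ∈ E := by
    rw [← coeff_map, hMmap, coeff_map]
    exact SetLike.coe_mem _
  have hAd : (M.coeff i).natDegree ≠ 0 := hi ▸ natDegree_swap_ne_zero_of_eval_X_eq_zero
    hM.ne_zero (by rw [hMmap, eval_map_algebraMap, minpoly.aeval])
  have hdvd : M ∣ (M.coeff i).map Polynomial.C - Polynomial.C (M.coeff i) :=
    (map_dvd_map _ (IsFractionRing.injective K[X] (RatFunc K)) hM).1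
      (hMmap ▸ map_minpoly_X_dvd hAE)
  refine ⟨M.coeff i, hAE, ?_⟩
  rw [← natDegree_eq_of_dvd_map_C_sub_C hM hAd hi.symm hdvd, finrank_eq_natDegree_minpoly_X hE,
    ← natDegree_map_eq_of_injective (algebraMap E (RatFunc K)).injective, ← hMmap,
    natDegree_map_eq_of_injective (IsFractionRing.injective K[X] (RatFunc K))]

end RatFunc

open RatFunc in
theorem stmt_2 (K : Type*) [Field K] (f₁ f₂ : K[X])
    (hf₁ : f₁.natDegree ≠ 0) (hf₂ : f₂.natDegree ≠ 0)
    (hbig : K⟮algebraMap K[X] (RatFunc K) f₁⟯ ⊓ K⟮algebraMap K[X] (RatFunc K) f₂⟯ ≠ ⊥) :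
    (∃ g₁ g₂ : K[X], g₁.natDegree ≠ 0 ∧ g₂.natDegree ≠ 0 ∧ g₁.comp f₁ = g₂.comp f₂) ∧
    ∀ h : K[X],
      ((∃ g₁ g₂ : K[X], g₁.natDegree ≠ 0 ∧ g₂.natDegree ≠ 0 ∧
          g₁.comp f₁ = h ∧ g₂.comp f₂ = h) ∧
        (∀ h' : K[X], (∃ g₁ g₂ : K[X], g₁.natDegree ≠ 0 ∧ g₂.natDegree ≠ 0 ∧
          g₁.comp f₁ = h' ∧ g₂.comp f₂ = h') → h.natDegree ≤ h'.natDegree)) →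
      (K⟮algebraMap K[X] (RatFunc K) f₁⟯ ⊓ K⟮algebraMap K[X] (RatFunc K) f₂⟯
          = K⟮algebraMap K[X] (RatFunc K) h⟯ ∧
       Algebra.adjoin K {f₁} ⊓ Algebra.adjoin K {f₂} = Algebra.adjoin K {h}) := by
  have := finiteDimensional_of_ne_bot hbig
  obtain ⟨w, hwd, hw⟩ := exists_natDegree_ne_zero_algebraMap_mem_inf hf₁ hf₂ hbig
  obtain ⟨A, hA, hAdeg⟩ := exists_algebraMap_mem_natDegree_eq_finrank hbig hw hwd
  have hAd : A.natDegree ≠ 0 := hAdeg ▸ Module.finrank_pos.ne'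
  obtain ⟨G₁, hG₁⟩ := (algebraMap_mem_adjoin_iff hf₁).1 hA.1
  obtain ⟨G₂, hG₂⟩ := (algebraMap_mem_adjoin_iff hf₂).1 hA.2
  have hG₁d : G₁.natDegree ≠ 0 := left_ne_zero_of_mul (by rwa [← natDegree_comp, hG₁])
  have hG₂d : G₂.natDegree ≠ 0 := left_ne_zero_of_mul (by rwa [← natDegree_comp, hG₂])
  refine ⟨⟨G₁, G₂, hG₁d, hG₂d, hG₁.trans hG₂.symm⟩, ?_⟩
  rintro h ⟨⟨g₁, g₂, hg₁, -, hh₁, hh₂⟩, hmin⟩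
  have hhd : h.natDegree ≠ 0 := by rw [← hh₁, natDegree_comp]; exact mul_ne_zero hg₁ hf₁
  have hKh : K⟮algebraMap K[X] (RatFunc K) h⟯ =
      K⟮algebraMap K[X] (RatFunc K) f₁⟯ ⊓ K⟮algebraMap K[X] (RatFunc K) f₂⟯ := by
    have := Module.finite_of_finrank_pos
      ((finrank_adjoin_algebraMap h).symm ▸ Nat.pos_of_ne_zero hhd)
    refine eq_of_le_of_finrank_le' (adjoin_simple_le_iff.2
      ⟨(algebraMap_mem_adjoin_iff hf₁).2 ⟨g₁, hh₁⟩, (algebraMap_mem_adjoin_iff hf₂).2 ⟨g₂, hh₂⟩⟩) ?_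
    rw [finrank_adjoin_algebraMap, ← hAdeg]
    exact hmin A ⟨G₁, G₂, hG₁d, hG₂d, hG₁, hG₂⟩
  refine ⟨hKh.symm, ?_⟩
  ext p
  rw [Algebra.mem_inf, mem_adjoin_singleton_iff_exists_comp, mem_adjoin_singleton_iff_exists_comp,
    mem_adjoin_singleton_iff_exists_comp, ← algebraMap_mem_adjoin_iff hf₁,
    ← algebraMap_mem_adjoin_iff hf₂, ← algebraMap_mem_adjoin_iff hhd, hKh, mem_inf]
end

section
/- Let K be a field and f₁, f₂ ∈ K[x] nonconstant. If h ∈ K̄[x] is a minimal-degree common composite of f₁ and f₂ over the algebraic closure K̄, then there is a degree-one polynomial ℓ ∈ K̄[x] with ℓ ∘ h ∈ K[x]. In particular, if h is monic with zero constant term, then h ∈ K[x]. -/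
/-!
Write `h = g₁ ∘ f₁ = g₂ ∘ f₂` over `K̄` with `n = deg g₁`. Dividing by the leading coefficient
of `g₁`, this relation expresses `f₁ ^ n` as a `K̄`-linear combination of the `f₁ ^ i` with `i < n`
and the `f₂ ^ j` with `j ≤ deg g₂`. All of these polynomials have coefficients in `K`, so applying a
`K`-linear retraction `K̄ → K` to the coefficients gives such a relation over `K`, and hence an
element `h₀` of `K[f₁] ∩ K[f₂]` with `deg h₀ = deg h`. For the right `c`, `h₀ - c h` lies in
`K̄[f₁] ∩ K̄[f₂]` and has smaller degree than `h`, so by minimality it is a constant `d`, and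
`h₀ = c h + d`.
-/

open Polynomial

namespace Polynomial

section CommSemiring

variable {R : Type*} [CommSemiring R]

def IsCommonComposite (f₁ f₂ h : R[X]) : Prop :=
  ∃ g₁ g₂ : R[X], g₁.natDegree ≠ 0 ∧ g₂.natDegree ≠ 0 ∧ g₁.comp f₁ = h ∧ g₂.comp f₂ = h

variable (R) in
noncomputable def commonComposites (f₁ f₂ : R[X]) : Subalgebra R R[X] :=
  (aeval f₁).range ⊓ (aeval f₂).range

theorem mem_commonComposites {f₁ f₂ h : R[X]} :
    h ∈ commonComposites R f₁ f₂ ↔ (∃ g₁ : R[X], g₁.comp f₁ = h) ∧ ∃ g₂ : R[X], g₂.comp f₂ = h :=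
  Iff.rfl

theorem map_mem_commonComposites {S : Type*} [CommSemiring S] (φ : R →+* S) {f₁ f₂ h : R[X]}
    (hh : h ∈ commonComposites R f₁ f₂) : h.map φ ∈ commonComposites S (f₁.map φ) (f₂.map φ) := by
  obtain ⟨⟨g₁, rfl⟩, ⟨g₂, hg₂⟩⟩ := mem_commonComposites.mp hh
  exact ⟨⟨g₁.map φ, (map_comp φ g₁ f₁).symm⟩, ⟨g₂.map φ, hg₂ ▸ (map_comp φ g₂ f₂).symm⟩⟩

theorem natDegree_ne_zero_of_natDegree_comp_ne_zero {g f : R[X]}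
    (h : (g.comp f).natDegree ≠ 0) : g.natDegree ≠ 0 := by
  contrapose! h
  simpa [h] using natDegree_comp_le (p := g) (q := f)

theorem isCommonComposite_of_mem_commonComposites {f₁ f₂ h : R[X]}
    (hh : h ∈ commonComposites R f₁ f₂) (hh0 : h.natDegree ≠ 0) : IsCommonComposite f₁ f₂ h := by
  obtain ⟨⟨g₁, rfl⟩, ⟨g₂, hg₂⟩⟩ := mem_commonComposites.mp hh
  exact ⟨g₁, g₂, natDegree_ne_zero_of_natDegree_comp_ne_zero hh0,
    natDegree_ne_zero_of_natDegree_comp_ne_zero (hg₂ ▸ hh0), rfl, hg₂⟩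

noncomputable def jointPowers (f₁ f₂ : R[X]) (n m : ℕ) : Fin n ⊕ Fin (m + 1) → R[X] :=
  Sum.elim (fun i => f₁ ^ (i : ℕ)) (fun j => f₂ ^ (j : ℕ))

theorem map_jointPowers {S : Type*} [CommSemiring S] (φ : R →+* S) (f₁ f₂ : R[X]) (n m : ℕ) :
    (fun s => (jointPowers f₁ f₂ n m s).map φ) = jointPowers (f₁.map φ) (f₂.map φ) n m := by
  ext1 s
  cases s <;> simp [jointPowers, Polynomial.map_pow]

theorem comp_eq_sum_range_smul_pow (g f : R[X]) :
    g.comp f = ∑ i ∈ Finset.range (g.natDegree + 1), g.coeff i • f ^ i := by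
  simp [comp, eval₂_eq_sum_range, smul_eq_C_mul]

end CommSemiring

theorem mem_span_range_of_map_mem_span {K L : Type*} [Field K] [CommRing L]
    [Nontrivial L] [Algebra K L] {ι : Type*} [Fintype ι] (b : ι → K[X]) {v : K[X]}
    (hv : v.map (algebraMap K L) ∈
      Submodule.span L (Set.range fun i => (b i).map (algebraMap K L))) :
    v ∈ Submodule.span K (Set.range b) := by
  obtain ⟨c, hc⟩ := (Submodule.mem_span_range_iff_exists_fun L).mp hv
  obtain ⟨π, hπ⟩ := (Algebra.linearMap K L).exists_leftInverse_of_injective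
    (LinearMap.ker_eq_bot.mpr (algebraMap K L).injective)
  have hπ_algebraMap (a : K) : π (algebraMap K L a) = a := LinearMap.congr_fun hπ a
  have hπ_mul (y : L) (a : K) : π (y * algebraMap K L a) = π y * a := by
    rw [mul_comm, ← Algebra.smul_def, map_smul, smul_eq_mul, mul_comm]
  refine (Submodule.mem_span_range_iff_exists_fun K).mpr ⟨fun i => π (c i), ?_⟩
  ext k
  simpa [finsetSum_coeff, hπ_mul, hπ_algebraMap] using
    congrArg (fun p : L[X] => π (p.coeff k)) hc

theorem pow_natDegree_mem_span_jointPowers {L : Type*} [Field L] {g₁ g₂ F₁ F₂ : L[X]}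
    (hg₁ : g₁ ≠ 0) (h : g₁.comp F₁ = g₂.comp F₂) :
    F₁ ^ g₁.natDegree ∈
      Submodule.span L (Set.range (jointPowers F₁ F₂ g₁.natDegree g₂.natDegree)) := by
  set V := Submodule.span L (Set.range (jointPowers F₁ F₂ g₁.natDegree g₂.natDegree))
  have hF₁ (i : ℕ) (hi : i ∈ Finset.range g₁.natDegree) : F₁ ^ i ∈ V :=
    Submodule.subset_span ⟨.inl ⟨i, Finset.mem_range.mp hi⟩, rfl⟩
  have hF₂ (j : ℕ) (hj : j ∈ Finset.range (g₂.natDegree + 1)) : F₂ ^ j ∈ V :=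
    Submodule.subset_span ⟨.inr ⟨j, Finset.mem_range.mp hj⟩, rfl⟩
  have hlc : g₁.coeff g₁.natDegree ≠ 0 := leadingCoeff_ne_zero.mpr hg₁
  have hpow : F₁ ^ g₁.natDegree = (g₁.coeff g₁.natDegree)⁻¹ •
      (g₂.comp F₂ - ∑ i ∈ Finset.range g₁.natDegree, g₁.coeff i • F₁ ^ i) := by
    rw [← h, comp_eq_sum_range_smul_pow g₁, Finset.sum_range_succ, add_sub_cancel_left,
      smul_smul, inv_mul_cancel₀ hlc, one_smul]
  rw [hpow, comp_eq_sum_range_smul_pow g₂]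
  exact V.smul_mem _ (V.sub_mem (V.sum_mem fun j hj => V.smul_mem _ (hF₂ j hj))
    (V.sum_mem fun i hi => V.smul_mem _ (hF₁ i hi)))

theorem exists_mem_commonComposites_of_pow_mem_span {K : Type*} [Field K] {f₁ f₂ : K[X]}
    {n m : ℕ} (hpow : f₁ ^ n ∈ Submodule.span K (Set.range (jointPowers f₁ f₂ n m))) :
    ∃ h₀ ∈ commonComposites K f₁ f₂, h₀.natDegree = n * f₁.natDegree := by
  obtain ⟨c, hc⟩ := (Submodule.mem_span_range_iff_exists_fun K).mp hpow
  set P₁ : K[X] := X ^ n - ∑ i : Fin n, C (c (.inl i)) * X ^ (i : ℕ)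
  set P₂ : K[X] := ∑ j : Fin (m + 1), C (c (.inr j)) * X ^ (j : ℕ)
  have hP₁ : P₁.natDegree = n := natDegree_eq_of_degree_eq_some <| by
    rw [degree_sub_eq_left_of_degree_lt (by simpa using degree_sum_fin_lt _), degree_X_pow]
  have hP : P₁.comp f₁ = P₂.comp f₂ := by
    rw [Fintype.sum_sum_type] at hc
    simp only [P₁, P₂, sub_comp, sum_comp, mul_comp, C_comp, pow_comp, X_comp, ← hc]
    simp [jointPowers, smul_eq_C_mul]
  exact ⟨P₁.comp f₁, ⟨⟨P₁, rfl⟩, ⟨P₂, hP.symm⟩⟩, by rw [natDegree_comp, hP₁]⟩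

theorem exists_linear_comp_eq_of_natDegree_eq {L : Type*} [Field L] {F₁ F₂ h H : L[X]}
    (hh : h ∈ commonComposites L F₁ F₂) (hh0 : h.natDegree ≠ 0)
    (hmin : ∀ h', IsCommonComposite F₁ F₂ h' → h.natDegree ≤ h'.natDegree)
    (hH : H ∈ commonComposites L F₁ F₂) (hdeg : H.natDegree = h.natDegree) :
    ∃ ℓ : L[X], ℓ.natDegree = 1 ∧ ℓ.comp h = H := by
  have hne : h ≠ 0 := ne_zero_of_natDegree_gt (Nat.pos_of_ne_zero hh0)
  have hHne : H ≠ 0 := ne_zero_of_natDegree_gt (Nat.pos_of_ne_zero (hdeg ▸ hh0))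
  set c := H.leadingCoeff / h.leadingCoeff
  have hc : c ≠ 0 := div_ne_zero (leadingCoeff_ne_zero.mpr hHne) (leadingCoeff_ne_zero.mpr hne)
  set D := H - C c * h
  have hD : D ∈ commonComposites L F₁ F₂ := by
    simpa only [smul_eq_C_mul] using sub_mem hH (Subalgebra.smul_mem _ hh c)
  have hDlt : D.degree < H.degree := by
    refine degree_sub_lt_left ?_ hHne ?_
    · rw [degree_C_mul hc, degree_eq_natDegree hne, degree_eq_natDegree hHne, hdeg]
    · rw [leadingCoeff_mul, leadingCoeff_C, div_mul_cancel₀ _ (leadingCoeff_ne_zero.mpr hne)]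
  have hD0 : D.natDegree = 0 := by
    by_contra hD0
    have := hmin D (isCommonComposite_of_mem_commonComposites hD hD0)
    have := natDegree_lt_natDegree (fun h0 => hD0 (by rw [h0, natDegree_zero])) hDlt
    omega
  refine ⟨C c * X + C (D.coeff 0), natDegree_linear hc, ?_⟩
  rw [add_comp, mul_comp, C_comp, X_comp, C_comp, ← eq_C_of_natDegree_eq_zero hD0]
  exact add_sub_cancel _ _

theorem exists_map_eq_of_map_eq_linear_comp {K L : Type*} [Field K] [Field L] [Algebra K L]
    {ℓ h : L[X]} {h₀ : K[X]} (hℓ : ℓ.natDegree = 1) (hℓh : h₀.map (algebraMap K L) = ℓ.comp h)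
    (hmon : h.Monic) (hcoeff : h.coeff 0 = 0) :
    ∃ h₁ : K[X], h₁.map (algebraMap K L) = h := by
  have hh0 : h.natDegree ≠ 0 := fun h0 => by simp [hmon.natDegree_eq_zero.mp h0] at hcoeff
  have hℓ1 : ℓ.coeff 1 = ℓ.leadingCoeff := by rw [leadingCoeff, hℓ]
  have hℓ0 : ℓ.leadingCoeff ≠ 0 :=
    leadingCoeff_ne_zero.mpr (ne_zero_of_natDegree_gt (hℓ ▸ Nat.one_pos))
  have hℓh' : ℓ.comp h = C ℓ.leadingCoeff * h + C (ℓ.coeff 0) := by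
    conv_lhs => rw [eq_X_add_C_of_natDegree_le_one hℓ.le]
    rw [add_comp, mul_comp, C_comp, X_comp, C_comp, hℓ1]
  have ha : algebraMap K L h₀.leadingCoeff = ℓ.leadingCoeff := by
    rw [← leadingCoeff_map, hℓh, leadingCoeff_comp hh0, hmon.leadingCoeff, one_pow, mul_one]
  have hb : algebraMap K L (h₀.coeff 0) = ℓ.coeff 0 := by
    rw [← coeff_map, hℓh, hℓh', coeff_add, coeff_C_mul, hcoeff, mul_zero, coeff_C_zero, zero_add]
  refine ⟨C h₀.leadingCoeff⁻¹ * (h₀ - C (h₀.coeff 0)), ?_⟩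
  rw [Polynomial.map_mul, Polynomial.map_sub, map_C, map_C, map_inv₀, ha, hb, hℓh, hℓh',
    add_sub_cancel_right, ← mul_assoc, ← C_mul, inv_mul_cancel₀ hℓ0, C_1, one_mul]

end Polynomial

theorem stmt_3_general (K : Type*) [Field K] (f₁ f₂ : K[X])
    (hf₁ : f₁.natDegree ≠ 0)
    (h : (AlgebraicClosure K)[X])
    (hcc : ∃ g₁ g₂ : (AlgebraicClosure K)[X], g₁.natDegree ≠ 0 ∧ g₂.natDegree ≠ 0 ∧
      g₁.comp (f₁.map (algebraMap K (AlgebraicClosure K))) = h ∧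
      g₂.comp (f₂.map (algebraMap K (AlgebraicClosure K))) = h)
    (hmin : ∀ h' : (AlgebraicClosure K)[X],
      (∃ g₁ g₂ : (AlgebraicClosure K)[X], g₁.natDegree ≠ 0 ∧ g₂.natDegree ≠ 0 ∧
        g₁.comp (f₁.map (algebraMap K (AlgebraicClosure K))) = h' ∧
        g₂.comp (f₂.map (algebraMap K (AlgebraicClosure K))) = h') →
      h.natDegree ≤ h'.natDegree) :
    (∃ ℓ : (AlgebraicClosure K)[X], ℓ.natDegree = 1 ∧
      ∃ h₀ : K[X], h₀.map (algebraMap K (AlgebraicClosure K)) = ℓ.comp h) ∧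
    (h.Monic → h.coeff 0 = 0 →
      ∃ h₀ : K[X], h₀.map (algebraMap K (AlgebraicClosure K)) = h) := by
  obtain ⟨g₁, g₂, hg₁, -, hg₁h, hg₂h⟩ := hcc
  have hdeg : h.natDegree = g₁.natDegree * f₁.natDegree := by
    rw [← hg₁h, natDegree_comp, natDegree_map]
  have hspan := pow_natDegree_mem_span_jointPowers (ne_zero_of_natDegree_gt
    (Nat.pos_of_ne_zero hg₁)) (hg₁h.trans hg₂h.symm)
  rw [← map_jointPowers, ← Polynomial.map_pow] at hspan
  obtain ⟨h₀, hh₀, hh₀deg⟩ :=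
    exists_mem_commonComposites_of_pow_mem_span (mem_span_range_of_map_mem_span _ hspan)
  obtain ⟨ℓ, hℓ, hℓh⟩ := exists_linear_comp_eq_of_natDegree_eq ⟨⟨g₁, hg₁h⟩, ⟨g₂, hg₂h⟩⟩
    (hdeg ▸ mul_ne_zero hg₁ hf₁) hmin (map_mem_commonComposites _ hh₀)
    (by rw [natDegree_map, hh₀deg, hdeg])
  exact ⟨⟨ℓ, hℓ, h₀, hℓh.symm⟩, exists_map_eq_of_map_eq_linear_comp hℓ hℓh.symm⟩

theorem stmt_3 (K : Type*) [Field K] (f₁ f₂ : K[X])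
    (hf₁ : f₁.natDegree ≠ 0) (hf₂ : f₂.natDegree ≠ 0)
    (h : (AlgebraicClosure K)[X])
    (hcc : ∃ g₁ g₂ : (AlgebraicClosure K)[X], g₁.natDegree ≠ 0 ∧ g₂.natDegree ≠ 0 ∧
      g₁.comp (f₁.map (algebraMap K (AlgebraicClosure K))) = h ∧
      g₂.comp (f₂.map (algebraMap K (AlgebraicClosure K))) = h)
    (hmin : ∀ h' : (AlgebraicClosure K)[X],
      (∃ g₁ g₂ : (AlgebraicClosure K)[X], g₁.natDegree ≠ 0 ∧ g₂.natDegree ≠ 0 ∧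
        g₁.comp (f₁.map (algebraMap K (AlgebraicClosure K))) = h' ∧
        g₂.comp (f₂.map (algebraMap K (AlgebraicClosure K))) = h') →
      h.natDegree ≤ h'.natDegree) :
    (∃ ℓ : (AlgebraicClosure K)[X], ℓ.natDegree = 1 ∧
      ∃ h₀ : K[X], h₀.map (algebraMap K (AlgebraicClosure K)) = ℓ.comp h) ∧
    (h.Monic → h.coeff 0 = 0 →
      ∃ h₀ : K[X], h₀.map (algebraMap K (AlgebraicClosure K)) = h) :=
  stmt_3_general K f₁ f₂ hf₁ h hcc hmin
end

section
/- Let K be a field of characteristic p ≥ 0 and f₁, f₂ ∈ K[x] nonconstant. If f₁ and f₂ have a common composite, then they have a common composite of degree lcm(deg f₁, deg f₂) · p^s for some integer s ≥ 0 (with the convention 0^0 = 1 when p = 0). -/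
/-!
Normalize a common composite `h = G₁ ∘ f₁ = G₂ ∘ f₂` to be monic and write
`deg h = lcm(deg f₁, deg f₂) · p^s · m'` with `m'` invertible in `K`. A polynomial whose leading
coefficient is an `m'`-th power has an approximate `m'`-th root in the sense of Abhyankar–Moh,
built one coefficient at a time by dividing by `m'`, and a monic approximate root is unique.
Since `m' ∣ deg Gᵢ`, composing an approximate root of `Gᵢ` with `fᵢ` gives a monic approximate
root of `h`; by uniqueness the two agree, giving a common composite of degree `deg h / m'`.
-/

open Polynomial Finset

theorem exists_eq_ringChar_pow_mul_of_ne_zero (R : Type*) [Ring R] [Nontrivial R] {m : ℕ}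
    (hm : m ≠ 0) : ∃ s m' : ℕ, m = ringChar R ^ s * m' ∧ (m' : R) ≠ 0 := by
  obtain ⟨s, m', hndvd, rfl⟩ :=
    Nat.exists_eq_pow_mul_and_not_dvd hm _ (CharP.ringChar_ne_one (R := R))
  exact ⟨s, m', rfl, by rwa [Ne, ringChar.spec]⟩

namespace Polynomial

section CommRing

variable {R : Type*} [CommRing R]

theorem degree_sub_lt_of_coeff_eq {p q : R[X]} {n : ℕ} (hp : p.degree ≤ n) (hq : q.degree ≤ n)
    (h : p.coeff n = q.coeff n) : (p - q).degree < n := by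
  rw [degree_le_iff_coeff_zero] at hp hq
  rw [degree_lt_iff_coeff_zero]
  intro k hk
  rcases hk.eq_or_lt with rfl | hk
  · rw [coeff_sub, h, sub_self]
  · rw [coeff_sub, hp k (WithBot.coe_lt_coe.2 hk), hq k (WithBot.coe_lt_coe.2 hk), sub_self]

theorem coeff_pow_mul_pow_of_natDegree_le {u v : R[X]} {r : ℕ} (hu : u.natDegree ≤ r)
    (hv : v.natDegree ≤ r) (i j : ℕ) :
    (u ^ i * v ^ j).coeff (r * (i + j)) = u.coeff r ^ i * v.coeff r ^ j := by
  rw [mul_add, mul_comm r, mul_comm r, coeff_mul_add_eq_of_natDegree_le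
    (natDegree_pow_le_of_le i hu) (natDegree_pow_le_of_le j hv), coeff_pow_of_natDegree_le hu,
    coeff_pow_of_natDegree_le hv]

theorem natDegree_geom_sum₂_le {u v : R[X]} {r : ℕ} (hu : u.natDegree ≤ r)
    (hv : v.natDegree ≤ r) (m : ℕ) :
    (∑ i ∈ range m, u ^ i * v ^ (m - 1 - i)).natDegree ≤ r * (m - 1) := by
  refine natDegree_sum_le_of_forall_le _ _ fun i hi ↦ ?_
  refine (natDegree_mul_le_of_le (natDegree_pow_le_of_le i hu) (natDegree_pow_le_of_le _ hv)).trans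
    (le_of_eq ?_)
  rw [← add_mul, Nat.add_sub_cancel' (by have := mem_range.1 hi; omega), mul_comm]

theorem coeff_geom_sum₂ {u v : R[X]} {r : ℕ} (hu : u.natDegree ≤ r) (hv : v.natDegree ≤ r)
    (huv : u.coeff r = v.coeff r) (m : ℕ) :
    (∑ i ∈ range m, u ^ i * v ^ (m - 1 - i)).coeff (r * (m - 1)) = m * u.coeff r ^ (m - 1) := by
  rw [finsetSum_coeff, Finset.sum_congr rfl fun i hi ↦ ?_, sum_const, card_range, nsmul_eq_mul]
  have hi : i + (m - 1 - i) = m - 1 := by have := mem_range.1 hi; omega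
  rw [← congrArg (r * ·) hi, coeff_pow_mul_pow_of_natDegree_le hu hv, ← huv, ← pow_add, hi]

end CommRing

section Field

variable {K : Type*} [Field K]

/-- Abhyankar–Moh approximate root; the bound `deg w * (m - 1)` is `deg P - deg w`. -/
def IsApproxRoot (m : ℕ) (P w : K[X]) : Prop :=
  w.natDegree * m = P.natDegree ∧ (P - w ^ m).degree < ↑(w.natDegree * (m - 1))

theorem IsApproxRoot.comp {m : ℕ} {P w f : K[X]} (h : IsApproxRoot m P w)
    (hf : f.natDegree ≠ 0) : IsApproxRoot m (P.comp f) (w.comp f) := by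
  refine ⟨by rw [natDegree_comp, natDegree_comp, ← h.1, mul_right_comm], ?_⟩
  rw [← pow_comp, ← sub_comp, natDegree_comp]
  rcases eq_or_ne (P - w ^ m) 0 with hE | hE
  · rw [hE, zero_comp, degree_zero]
    exact WithBot.bot_lt_coe _
  have hlt := (natDegree_lt_iff_degree_lt hE).2 h.2
  rw [degree_comp (natDegree_pos_iff_degree_pos.1 (Nat.pos_of_ne_zero hf)),
    degree_eq_natDegree hE, degree_eq_natDegree (ne_zero_of_natDegree_gt (Nat.pos_of_ne_zero hf)),
    mul_right_comm]
  exact_mod_cast Nat.mul_lt_mul_of_pos_right hlt (Nat.pos_of_ne_zero hf)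

theorem IsApproxRoot.eq_of_leadingCoeff_eq {m : ℕ} (hm : (m : K) ≠ 0) {P w w' : K[X]} (h : IsApproxRoot m P w)
    (h' : IsApproxRoot m P w') (hlc : w.leadingCoeff = w'.leadingCoeff) : w = w' := by
  have hm0 : m ≠ 0 := by rintro rfl; exact hm Nat.cast_zero
  set r := w.natDegree
  have hr : w'.natDegree = r :=
    Nat.eq_of_mul_eq_mul_right (Nat.pos_of_ne_zero hm0) (h'.1.trans h.1.symm)
  by_contra hne
  set S := ∑ i ∈ range m, w ^ i * w' ^ (m - 1 - i)
  have hc : w.leadingCoeff ≠ 0 := by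
    rintro hc0
    exact hne ((leadingCoeff_eq_zero.1 hc0).trans (leadingCoeff_eq_zero.1 (hlc ▸ hc0)).symm)
  have hS : S.degree = ↑(r * (m - 1)) := by
    refine degree_eq_of_le_of_coeff_ne_zero ?_ ?_
    · exact degree_le_of_natDegree_le (natDegree_geom_sum₂_le le_rfl hr.le m)
    · rw [coeff_geom_sum₂ le_rfl hr.le (by simpa only [leadingCoeff, hr] using hlc) m]
      exact mul_ne_zero hm (pow_ne_zero _ hc)
  have hlt : (w ^ m - w' ^ m).degree < ↑(r * (m - 1)) := by
    rw [← sub_sub_sub_cancel_left _ _ P]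
    exact (degree_sub_le _ _).trans_lt (max_lt (hr ▸ h'.2) h.2)
  rw [← geom_sum₂_mul, degree_mul, hS] at hlt
  exact hlt.not_ge (le_add_of_nonneg_right (zero_le_degree_iff.2 (sub_ne_zero.2 hne)))

theorem exists_approxRoot_step {m r t : ℕ} {c : K} (hm : (m : K) ≠ 0) (hc : c ≠ 0) (ht : t < r)
    {P w : K[X]} (hw : w.natDegree ≤ r) (hwc : w.coeff r = c)
    (hP : (P - w ^ m).degree ≤ ↑(r * (m - 1) + t)) :
    ∃ w' : K[X], w'.natDegree ≤ r ∧ w'.coeff r = c ∧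
      (P - w' ^ m).degree < ↑(r * (m - 1) + t) := by
  set N := r * (m - 1) + t
  -- `(w + C a * X ^ t) ^ m - w ^ m = S * C a * X ^ t` with `S` of leading coefficient
  -- `m * c ^ (m - 1)`, so this `a` cancels the coefficient of `X ^ N` in `P - w ^ m`.
  set a := (P - w ^ m).coeff N / (m * c ^ (m - 1))
  set S := ∑ i ∈ range m, (w + C a * X ^ t) ^ i * w ^ (m - 1 - i)
  have hw' : (w + C a * X ^ t).natDegree ≤ r :=
    natDegree_add_le_of_degree_le hw ((natDegree_C_mul_X_pow_le a t).trans ht.le)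
  have hw'c : (w + C a * X ^ t).coeff r = c := by
    rw [coeff_add, coeff_C_mul_X_pow, if_neg ht.ne', add_zero, hwc]
  refine ⟨w + C a * X ^ t, hw', hw'c, ?_⟩
  have hexpand : P - (w + C a * X ^ t) ^ m = (P - w ^ m) - S * X ^ t * C a := by
    rw [mul_assoc, mul_comm (X ^ t), ← add_sub_cancel_left w (C a * X ^ t), geom_sum₂_mul,
      add_sub_cancel_left]
    ring
  have hSX : (S * X ^ t * C a).natDegree ≤ N :=
    (natDegree_mul_C_le _ _).trans
      (natDegree_mul_le_of_le (natDegree_geom_sum₂_le hw' hw m) (natDegree_X_pow_le t))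
  rw [hexpand]
  refine degree_sub_lt_of_coeff_eq hP ?_ ?_
  · exact degree_le_of_natDegree_le hSX
  · rw [coeff_mul_C, coeff_mul_X_pow, coeff_geom_sum₂ hw' hw (hw'c.trans hwc.symm), hw'c]
    exact (mul_div_cancel₀ _ (mul_ne_zero hm (pow_ne_zero _ hc))).symm

theorem exists_isApproxRoot {m r : ℕ} {c : K} (hm : (m : K) ≠ 0) (hc : c ≠ 0) {P : K[X]}
    (hP : P.natDegree = r * m) (hlc : P.leadingCoeff = c ^ m) :
    ∃ w : K[X], w.leadingCoeff = c ∧ IsApproxRoot m P w := by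
  have hm0 : m ≠ 0 := by rintro rfl; exact hm Nat.cast_zero
  have happrox : ∀ j ≤ r, ∃ w : K[X], w.natDegree ≤ r ∧ w.coeff r = c ∧
      (P - w ^ m).degree < ↑(r * (m - 1) + (r - j)) := by
    intro j hj
    induction j with
    | zero =>
      refine ⟨C c * X ^ r, natDegree_C_mul_X_pow_le c r, by simp, ?_⟩
      have hrm : r * (m - 1) + (r - 0) = r * m := by
        rw [Nat.sub_zero, ← Nat.mul_succ, Nat.succ_eq_add_one,
          Nat.sub_add_cancel (Nat.one_le_iff_ne_zero.2 hm0)]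
      have hpow : (C c * X ^ r) ^ m = C (c ^ m) * X ^ (r * m) := by
        rw [mul_pow, ← C_pow, ← pow_mul]
      rw [hrm, hpow]
      refine degree_sub_lt_of_coeff_eq ?_ ?_ ?_
      · exact degree_le_of_natDegree_le hP.le
      · exact degree_C_mul_X_pow_le _ _
      · rw [← hP, coeff_natDegree, hlc, hP, coeff_C_mul_X_pow, if_pos rfl]
    | succ j ih =>
      obtain ⟨w, hw, hwc, hlt⟩ := ih (Nat.le_of_succ_le hj)
      have hrj : r - j = r - (j + 1) + 1 := by omega
      rw [hrj, ← add_assoc] at hlt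
      exact exists_approxRoot_step hm hc (by omega) hw hwc (Order.le_of_lt_succ hlt)
  obtain ⟨w, hw, hwc, hlt⟩ := happrox r le_rfl
  rw [Nat.sub_self, add_zero] at hlt
  have hwd : w.natDegree = r := natDegree_eq_of_le_of_coeff_ne_zero hw (hwc ▸ hc)
  refine ⟨w, by rw [leadingCoeff, hwd, hwc], by rw [hwd, hP], by rwa [hwd]⟩

theorem exists_monic_isApproxRoot_comp {m : ℕ} (hm : (m : K) ≠ 0) {G f : K[X]}
    (hf : f.natDegree ≠ 0) (hmon : (G.comp f).Monic)
    (hdvd : f.natDegree * m ∣ (G.comp f).natDegree) :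
    ∃ a : K[X], (a.comp f).Monic ∧ IsApproxRoot m (G.comp f) (a.comp f) := by
  rw [natDegree_comp, mul_comm, Nat.mul_dvd_mul_iff_right (Nat.pos_of_ne_zero hf)] at hdvd
  obtain ⟨k, hk⟩ := hdvd
  have hf0 : f.leadingCoeff ^ k ≠ 0 :=
    pow_ne_zero _ (leadingCoeff_ne_zero.2 (ne_zero_of_natDegree_gt (Nat.pos_of_ne_zero hf)))
  have hlc : G.leadingCoeff = (f.leadingCoeff ^ k)⁻¹ ^ m := by
    have := hmon.leadingCoeff
    rw [leadingCoeff_comp hf, hk, pow_mul'] at this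
    rw [inv_pow]
    exact eq_inv_of_mul_eq_one_left this
  obtain ⟨a, ha, hroot⟩ := exists_isApproxRoot hm (inv_ne_zero hf0) (hk.trans (mul_comm _ _)) hlc
  have had : a.natDegree = k := by
    have hm0 : 0 < m := Nat.pos_of_ne_zero (by rintro rfl; exact hm Nat.cast_zero)
    exact Nat.eq_of_mul_eq_mul_right hm0 (hroot.1.trans (hk.trans (mul_comm _ _)))
  refine ⟨a, ?_, hroot.comp hf⟩
  rw [Monic, leadingCoeff_comp hf, ha, had, inv_mul_cancel₀ hf0]

theorem exists_monic_comp_eq_comp {f₁ f₂ g₁ g₂ : K[X]} (hf₁ : f₁.natDegree ≠ 0)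
    (hg₁ : g₁.natDegree ≠ 0) (h : g₁.comp f₁ = g₂.comp f₂) :
    ∃ G₁ G₂ : K[X], G₁.natDegree ≠ 0 ∧ G₁.comp f₁ = G₂.comp f₂ ∧ (G₁.comp f₁).Monic := by
  have hu : (g₁.comp f₁).leadingCoeff ≠ 0 := by
    rw [Ne, leadingCoeff_eq_zero]
    intro h0
    exact mul_ne_zero hg₁ hf₁ (by rw [← natDegree_comp, h0, natDegree_zero])
  refine ⟨C (g₁.comp f₁).leadingCoeff⁻¹ * g₁, C (g₁.comp f₁).leadingCoeff⁻¹ * g₂,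
    by rwa [natDegree_C_mul (inv_ne_zero hu)], by rw [mul_comp, mul_comp, C_comp, C_comp, h], ?_⟩
  rw [mul_comp, C_comp]
  exact monic_C_mul_of_mul_leadingCoeff_eq_one (inv_mul_cancel₀ hu)

end Field

end Polynomial

theorem stmt_4 (K : Type*) [Field K] (f₁ f₂ : K[X])
    (hf₁ : f₁.natDegree ≠ 0) (hf₂ : f₂.natDegree ≠ 0)
    (h : ∃ g₁ g₂ : K[X], g₁.natDegree ≠ 0 ∧ g₂.natDegree ≠ 0 ∧ g₁.comp f₁ = g₂.comp f₂) :
    ∃ (s : ℕ) (g₁ g₂ : K[X]), g₁.natDegree ≠ 0 ∧ g₂.natDegree ≠ 0 ∧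
      g₁.comp f₁ = g₂.comp f₂ ∧
      (g₁.comp f₁).natDegree = Nat.lcm f₁.natDegree f₂.natDegree * (ringChar K) ^ s := by
  obtain ⟨g₁, g₂, hg₁, -, hg⟩ := h
  obtain ⟨G₁, G₂, hG₁, hG, hmon⟩ := exists_monic_comp_eq_comp hf₁ hg₁ hg
  have hn₁ : (G₁.comp f₁).natDegree = G₁.natDegree * f₁.natDegree := natDegree_comp
  have hn₂ : (G₁.comp f₁).natDegree = G₂.natDegree * f₂.natDegree := hG ▸ natDegree_comp
  obtain ⟨m, hm⟩ := Nat.lcm_dvd (Dvd.intro_left _ hn₁.symm) (Dvd.intro_left _ hn₂.symm)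
  have hn0 : (G₁.comp f₁).natDegree ≠ 0 := hn₁ ▸ mul_ne_zero hG₁ hf₁
  obtain ⟨s, m', rfl, hm'⟩ :=
    exists_eq_ringChar_pow_mul_of_ne_zero K (right_ne_zero_of_mul (hm ▸ hn0))
  have hdvd {d : ℕ} (hd : d ∣ Nat.lcm f₁.natDegree f₂.natDegree) :
      d * m' ∣ (G₁.comp f₁).natDegree :=
    hm ▸ mul_dvd_mul hd (dvd_mul_left m' _)
  obtain ⟨a₁, ha₁, hr₁⟩ :=
    exists_monic_isApproxRoot_comp hm' hf₁ hmon (hdvd (Nat.dvd_lcm_left _ _))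
  obtain ⟨a₂, ha₂, hr₂⟩ :=
    exists_monic_isApproxRoot_comp hm' hf₂ (hG ▸ hmon) (hG ▸ hdvd (Nat.dvd_lcm_right _ _))
  rw [← hG] at hr₂
  have heq := hr₁.eq_of_leadingCoeff_eq hm' hr₂ (ha₁.leadingCoeff.trans ha₂.leadingCoeff.symm)
  have hne : (a₁.comp f₁).natDegree ≠ 0 := left_ne_zero_of_mul (hr₁.1 ▸ hn0)
  refine ⟨s, a₁, a₂, ?_, ?_, heq, ?_⟩
  · rw [natDegree_comp] at hne
    exact left_ne_zero_of_mul hne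
  · rw [heq, natDegree_comp] at hne
    exact left_ne_zero_of_mul hne
  exact Nat.eq_of_mul_eq_mul_right (Nat.pos_of_ne_zero (right_ne_zero_of_mul (hr₁.1 ▸ hn0)))
    (hr₁.1.trans (hm.trans (mul_assoc _ _ _).symm))
end

section
/- Let K be a field of characteristic p > 0 and let n be a positive integer not divisible by p. Let d be the multiplicative order of p^r modulo n. Then (x^{p^{rd}} − x)^n is a common composite of x^n and x^{p^r} − x over K, and no common composite has smaller degree. -/
/-!
With `q = p ^ r`, the upper bound is explicit: `n ∣ q ^ d - 1` makes `(x ^ (q ^ d) - x) ^ n`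
a polynomial in `x ^ n`, and `x ^ (q ^ d) - x = ∑_{i<d} (x ^ q - x) ^ (q ^ i)` telescopes.

For the lower bound, pass to an algebraic closure. A common composite `h` is invariant under
`x ↦ ζ x` for every `n`-th root of unity `ζ` and under `x ↦ x + c` for every `c ∈ 𝔽_q`.
Its group of translations is therefore closed under multiplication by a primitive `ζ` and
contains the finite field `𝔽_q(ζ)`, which has at least `q ^ d` elements because `ζ` lies in its
unit group.
For a generic `b`, the `n · |𝔽_q(ζ)|` points `ζ ^ i * b + a` are distinct roots of `h - h(b)`.
-/

open Polynomial
open scoped Pointwise Finset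

theorem Algebra.adjoin_singleton_subset_of_mul_mem {R L : Type*} [CommSemiring R] [CommRing L]
    [Algebra R L] {A : AddSubgroup L} (hR : ∀ c, algebraMap R L c ∈ A) {ζ : L}
    (hζ : ∀ a ∈ A, ζ * a ∈ A) : (Algebra.adjoin R {ζ} : Set L) ⊆ A := by
  suffices h : ∀ P : R[X], aeval ζ P ∈ A by
    rw [Algebra.adjoin_singleton_eq_range_aeval]
    rintro _ ⟨P, rfl⟩
    exact h P
  intro P
  induction P using Polynomial.induction_on with
  | C c => simpa using hR c
  | add P Q hP hQ => simpa using A.add_mem hP hQ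
  | monomial k c ih =>
    have := hζ _ ih
    simp only [map_mul, aeval_C, map_pow, aeval_X] at this ⊢
    rwa [pow_succ', mul_left_comm]

namespace Polynomial

section CommRing

variable {R : Type*} [CommRing R]

theorem X_mul_X_pow_sub_one_pow_comp_X_pow (n k : ℕ) :
    (X * (X ^ k - 1) ^ n : R[X]).comp (X ^ n) = (X ^ (n * k + 1) - X) ^ n := by
  rw [mul_comp, X_comp, pow_comp, sub_comp, pow_comp, X_comp, one_comp, ← mul_pow, ← pow_mul,
    mul_sub, mul_one, ← pow_succ']

theorem sum_X_pow_comp_X_pow_sub_X (p : ℕ) [Fact p.Prime] [CharP R p] (r d : ℕ) :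
    (∑ i ∈ Finset.range d, (X : R[X]) ^ p ^ (r * i)).comp (X ^ p ^ r - X) =
      X ^ p ^ (r * d) - X := by
  have hterm (i : ℕ) : ((X : R[X]) ^ p ^ (r * i)).comp (X ^ p ^ r - X) =
      X ^ p ^ (r * (i + 1)) - X ^ p ^ (r * i) := by
    rw [pow_comp, X_comp, sub_pow_char_pow, ← pow_mul, ← pow_add, mul_add_one, add_comm]
  simp only [sum_comp, hterm]
  rw [Finset.sum_range_sub (fun i ↦ (X : R[X]) ^ p ^ (r * i)), mul_zero, pow_zero, pow_one]

theorem exists_comp_X_pow_and_comp_X_pow_sub_X_eq (p : ℕ) [Fact p.Prime] [CharP R p]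
    {n r d : ℕ} (hdvd : n ∣ p ^ (r * d) - 1) :
    ∃ g₁ g₂ : R[X], g₁.comp (X ^ n) = (X ^ p ^ (r * d) - X) ^ n ∧
      g₂.comp (X ^ p ^ r - X) = (X ^ p ^ (r * d) - X) ^ n := by
  obtain ⟨k, hk⟩ := hdvd
  refine ⟨X * (X ^ k - 1) ^ n, (∑ i ∈ Finset.range d, X ^ p ^ (r * i)) ^ n, ?_, ?_⟩
  · rw [X_mul_X_pow_sub_one_pow_comp_X_pow, ← hk,
      Nat.sub_add_cancel (Nat.one_le_pow _ _ (Fact.out : p.Prime).pos)]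
  · rw [pow_comp, sum_X_pow_comp_X_pow_sub_X]

def translationStabilizer (H : R[X]) : AddSubgroup R where
  carrier := {a | H.comp (X + C a) = H}
  zero_mem' := by simp
  add_mem' {a b} ha hb := by
    simp only [Set.mem_ofPred_eq, ← taylor_apply] at *
    rw [← taylor_taylor, hb, ha]
  neg_mem' {a} ha := by
    simp only [Set.mem_ofPred_eq, ← taylor_apply] at *
    conv_lhs => rw [← ha]
    rw [taylor_taylor, neg_add_cancel, taylor_zero]

theorem mem_translationStabilizer {H : R[X]} {a : R} :
    a ∈ translationStabilizer H ↔ H.comp (X + C a) = H := Iff.rfl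

theorem mul_mem_translationStabilizer {H : R[X]} {z w a : R} (hzw : z * w = 1)
    (hz : H.comp (C z * X) = H) (ha : a ∈ translationStabilizer H) :
    z * a ∈ translationStabilizer H := by
  have hw : H.comp (C w * X) = H := by
    conv_lhs => rw [← hz]
    rw [comp_assoc, mul_comp, C_comp, X_comp, ← mul_assoc, ← C_mul, hzw, C_1, one_mul, comp_X]
  have hconj : (X + C (z * a) : R[X]) = (C z * X).comp ((X + C a).comp (C w * X)) := by
    rw [mul_comp, C_comp, X_comp, add_comp, X_comp, C_comp, mul_add, ← mul_assoc, ← C_mul, hzw,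
      C_1, one_mul, C_mul]
  rw [mem_translationStabilizer, hconj, ← comp_assoc, ← comp_assoc, hz, ha.out, hw]

theorem comp_X_pow_comp_C_mul_X {G : R[X]} {n : ℕ} {z : R} (hz : z ^ n = 1) :
    (G.comp (X ^ n)).comp (C z * X) = G.comp (X ^ n) := by
  rw [comp_assoc, pow_comp, X_comp, mul_pow, ← C_pow, hz, C_1, one_mul]

theorem mem_translationStabilizer_comp_X_pow_sub_X (p : ℕ) [Fact p.Prime] [CharP R p]
    {G : R[X]} {r : ℕ} {c : R} (hc : c ^ p ^ r = c) :
    c ∈ translationStabilizer (G.comp (X ^ p ^ r - X)) := by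
  rw [mem_translationStabilizer, comp_assoc, sub_comp, pow_comp, X_comp, add_pow_char_pow,
    ← C_pow, hc, add_sub_add_right_eq_sub]

end CommRing

theorem card_mul_card_le_natDegree_of_invariant {L : Type*} [Field L] [Infinite L] {H : L[X]}
    (hH : H.natDegree ≠ 0) (Z A : Finset L) (hZ : ∀ z ∈ Z, H.comp (C z * X) = H)
    (hA : ∀ a ∈ A, a ∈ translationStabilizer H) : #Z * #A ≤ H.natDegree := by
  classical
  obtain ⟨b, hb⟩ := Infinite.exists_notMem_finset ((A - A) / (Z - Z))
  have hinj : Set.InjOn (fun x : L × L ↦ x.1 * b + x.2) ↑(Z ×ˢ A) := by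
    rintro ⟨z, a⟩ hza ⟨z', a'⟩ hza' heq
    simp only [Finset.coe_product, Set.mem_prod, Finset.mem_coe] at hza hza' heq
    obtain rfl | hzz := eq_or_ne z z'
    · simpa using heq
    · refine absurd ?_ hb
      have hb' : b = (a' - a) / (z - z') := by
        rw [eq_div_iff (sub_ne_zero.2 hzz)]
        linear_combination heq
      exact hb' ▸
        Finset.div_mem_div (Finset.sub_mem_sub hza'.2 hza.2) (Finset.sub_mem_sub hza.1 hza'.1)
  have hroots : ((Z ×ˢ A).image fun x ↦ x.1 * b + x.2).val ⊆ (H - C (H.eval b)).roots := by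
    have hne : H - C (H.eval b) ≠ 0 := fun h ↦ hH (by rw [sub_eq_zero.1 h, natDegree_C])
    intro x hx
    obtain ⟨⟨z, a⟩, hza, rfl⟩ := Finset.mem_image.1 hx
    rw [Finset.mem_product] at hza
    have heval : H.eval (z * b + a) = H.eval b := by
      calc H.eval (z * b + a) = (H.comp (X + C a)).eval (z * b) := by simp
        _ = (H.comp (C z * X)).eval b := by rw [(hA a hza.2).out]; simp
        _ = H.eval b := by rw [hZ z hza.1]
    rw [mem_roots hne, IsRoot, eval_sub, eval_C, heval, sub_self]
  calc #Z * #A = #((Z ×ˢ A).image fun x ↦ x.1 * b + x.2) := by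
        rw [Finset.card_image_of_injOn hinj, Finset.card_product]
    _ ≤ (H - C (H.eval b)).natDegree := card_le_degree_of_subset_roots hroots
    _ = H.natDegree := natDegree_sub_C

end Polynomial

theorem ZMod.natCast_pow_eq_one_iff_dvd {a k n : ℕ} (ha : 0 < a) :
    (a : ZMod n) ^ k = 1 ↔ n ∣ a ^ k - 1 := by
  rw [← Nat.cast_pow, ← Nat.cast_one, ZMod.natCast_eq_natCast_iff, Nat.ModEq.comm,
    Nat.modEq_iff_dvd' (Nat.one_le_pow _ _ ha)]

theorem FiniteField.pow_orderOf_le_natCard {F E : Type*} [Field F] [Field E] [Algebra F E]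
    [Finite E] {ζ : E} {n : ℕ} (hn : n ≠ 0) (hζ : IsPrimitiveRoot ζ n) :
    Nat.card F ^ orderOf (Nat.card F : ZMod n) ≤ Nat.card E := by
  have : Finite F := Finite.of_injective _ (algebraMap F E).injective
  have hcard : Nat.card E = Nat.card F ^ Module.finrank F E := Module.natCard_eq_pow_finrank
  have hζ1 : ζ ^ (Nat.card E - 1) = 1 := by
    have := Fintype.ofFinite E
    rw [← Fintype.card_eq_nat_card]
    exact FiniteField.pow_card_sub_one_eq_one ζ (hζ.ne_zero hn)
  have hdvd : orderOf (Nat.card F : ZMod n) ∣ Module.finrank F E :=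
    orderOf_dvd_of_pow_eq_one <| (ZMod.natCast_pow_eq_one_iff_dvd Nat.card_pos).2 <|
      hcard ▸ hζ.dvd_of_pow_eq_one _ hζ1
  calc Nat.card F ^ orderOf (Nat.card F : ZMod n)
      ≤ Nat.card F ^ Module.finrank F E :=
        Nat.pow_le_pow_right Nat.card_pos (Nat.le_of_dvd Module.finrank_pos hdvd)
    _ = Nat.card E := hcard.symm

theorem natCard_eqLocusField_iterateFrobenius (L : Type*) [Field L] [IsAlgClosed L]
    (p : ℕ) [Fact p.Prime] [CharP L p] {r : ℕ} (hr : r ≠ 0) :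
    Nat.card ((iterateFrobenius L p r).eqLocusField (RingHom.id L)) = p ^ r := by
  have hq : 1 < p ^ r := Nat.one_lt_pow hr (Fact.out : p.Prime).one_lt
  have hset : ((iterateFrobenius L p r).eqLocusField (RingHom.id L) : Set L) =
      (X ^ p ^ r - X : L[X]).rootSet L := by
    ext x
    simp [mem_rootSet, FiniteField.X_pow_card_sub_X_ne_zero L hq, sub_eq_zero,
      iterateFrobenius_def]
  rw [← SetLike.coe_sort_coe, hset, Nat.card_eq_fintype_card,
    card_rootSet_eq_natDegree (galois_poly_separable p _ (dvd_pow_self p hr))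
      (IsAlgClosed.splits _), FiniteField.X_pow_card_sub_X_natDegree_eq L hq]

open IntermediateField in
theorem mul_pow_orderOf_le_natDegree_of_isAlgClosed {L : Type*} [Field L] [IsAlgClosed L]
    {p : ℕ} [Fact p.Prime] [CharP L p] {n r : ℕ} (hpn : ¬ p ∣ n) (hr : r ≠ 0)
    {H G₁ G₂ : L[X]} (hH : H.natDegree ≠ 0) (h₁ : G₁.comp (X ^ n) = H)
    (h₂ : G₂.comp (X ^ p ^ r - X) = H) :
    n * p ^ (r * orderOf ((p : ZMod n) ^ r)) ≤ H.natDegree := by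
  have hn : 0 < n := Nat.pos_of_ne_zero <| by rintro rfl; exact hpn (dvd_zero p)
  have : NeZero (n : L) := ⟨fun h ↦ hpn ((CharP.cast_eq_zero_iff L p n).1 h)⟩
  obtain ⟨ζ, hζ⟩ := HasEnoughRootsOfUnity.exists_primitiveRoot L n
  -- the copy of `𝔽_q` inside `L`
  set F := (iterateFrobenius L p r).eqLocusField (RingHom.id L)
  have hcardF : Nat.card F = p ^ r := natCard_eqLocusField_iterateFrobenius L p hr
  have hscale : ∀ z ∈ nthRootsFinset n (1 : L), H.comp (C z * X) = H :=
    fun z hz ↦ h₁ ▸ comp_X_pow_comp_C_mul_X ((mem_nthRootsFinset hn 1).1 hz)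
  have htrans (c : F) : algebraMap F L c ∈ translationStabilizer H :=
    h₂ ▸ mem_translationStabilizer_comp_X_pow_sub_X p c.2
  have hζA (a : L) : a ∈ translationStabilizer H → ζ * a ∈ translationStabilizer H :=
    mul_mem_translationStabilizer (w := ζ ^ (n - 1))
      (by rw [← pow_succ', Nat.sub_add_cancel hn, hζ.pow_eq_one])
      (hscale ζ (hζ.mem_nthRootsFinset hn))
  have hζint : IsIntegral F ζ :=
    IsIntegral.of_pow hn (by rw [hζ.pow_eq_one]; exact isIntegral_one)
  have : FiniteDimensional F F⟮ζ⟯ := adjoin.finiteDimensional hζint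
  have : Finite F :=
    Nat.finite_of_card_ne_zero (hcardF ▸ (pow_pos (Fact.out : p.Prime).pos r).ne')
  have : Finite F⟮ζ⟯ := Module.finite_of_finite F
  have hEA : (F⟮ζ⟯ : Set L) ⊆ translationStabilizer H := by
    rw [← coe_toSubalgebra, adjoin_simple_toSubalgebra_of_isAlgebraic hζint.isAlgebraic]
    exact Algebra.adjoin_singleton_subset_of_mul_mem htrans hζA
  have hcardE := FiniteField.pow_orderOf_le_natCard (F := F) hn.ne'
    ((IsPrimitiveRoot.coe_submonoidClass_iff (ζ := ⟨ζ, mem_adjoin_simple_self F ζ⟩)).1 hζ)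
  rw [hcardF, Nat.cast_pow] at hcardE
  have hfin := (F⟮ζ⟯ : Set L).toFinite
  calc n * p ^ (r * orderOf ((p : ZMod n) ^ r))
      ≤ #(nthRootsFinset n (1 : L)) * #hfin.toFinset := by
        rw [hζ.card_nthRootsFinset, ← Nat.card_eq_card_finite_toFinset, pow_mul]
        exact Nat.mul_le_mul_left n hcardE
    _ ≤ H.natDegree :=
        card_mul_card_le_natDegree_of_invariant hH _ _ hscale fun a ha ↦ hEA (by simpa using ha)

theorem mul_pow_orderOf_le_natDegree {K : Type*} [Field K] {p : ℕ} [Fact p.Prime] [CharP K p]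
    {n r : ℕ} (hpn : ¬ p ∣ n) (hr : r ≠ 0) {H G₁ G₂ : K[X]} (hH : H.natDegree ≠ 0)
    (h₁ : G₁.comp (X ^ n) = H) (h₂ : G₂.comp (X ^ p ^ r - X) = H) :
    n * p ^ (r * orderOf ((p : ZMod n) ^ r)) ≤ H.natDegree := by
  let L := AlgebraicClosure K
  have : CharP L p := charP_of_injective_algebraMap (algebraMap K L).injective p
  rw [← natDegree_map (algebraMap K L)] at hH ⊢
  refine mul_pow_orderOf_le_natDegree_of_isAlgClosed hpn hr hH (G₁ := G₁.map (algebraMap K L))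
    (G₂ := G₂.map (algebraMap K L)) ?_ ?_
  · rw [← h₁, Polynomial.map_comp, Polynomial.map_pow, map_X]
  · rw [← h₂, Polynomial.map_comp, Polynomial.map_sub, Polynomial.map_pow, map_X]

theorem stmt_6_general (K : Type*) [Field K] (p : ℕ) (hp : p.Prime) [CharP K p]
    (n r : ℕ) (hpn : ¬ p ∣ n) (hr : 0 < r)
    (d : ℕ) (hd : d = orderOf ((p : ZMod n) ^ r)) :
    (∃ g₁ g₂ : K[X], g₁.natDegree ≠ 0 ∧ g₂.natDegree ≠ 0 ∧
      g₁.comp (X ^ n) = (X ^ (p ^ (r * d)) - X) ^ n ∧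
      g₂.comp (X ^ (p ^ r) - X) = (X ^ (p ^ (r * d)) - X) ^ n) ∧
    ∀ h : K[X], (∃ g₁ g₂ : K[X], g₁.natDegree ≠ 0 ∧ g₂.natDegree ≠ 0 ∧
        g₁.comp (X ^ n) = h ∧ g₂.comp (X ^ (p ^ r) - X) = h) →
      ((X ^ (p ^ (r * d)) - X) ^ n : K[X]).natDegree ≤ h.natDegree := by
  have : Fact p.Prime := ⟨hp⟩
  have hn : n ≠ 0 := by rintro rfl; exact hpn (dvd_zero p)
  have : NeZero n := ⟨hn⟩
  have hd0 : d ≠ 0 := by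
    rw [hd, ← ((ZMod.isUnit_prime_of_not_dvd hp hpn).pow r).unit_spec, orderOf_units]
    exact (orderOf_pos _).ne'
  have hq : 1 < p ^ (r * d) := Nat.one_lt_pow (Nat.mul_ne_zero hr.ne' hd0) hp.one_lt
  have hdeg : ((X ^ p ^ (r * d) - X : K[X]) ^ n).natDegree = n * p ^ (r * d) := by
    rw [natDegree_pow, FiniteField.X_pow_card_sub_X_natDegree_eq K hq]
  have hdeg0 : ((X ^ p ^ (r * d) - X : K[X]) ^ n).natDegree ≠ 0 := by
    rw [hdeg]; exact Nat.mul_ne_zero hn (by positivity)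
  refine ⟨?_, ?_⟩
  · have hdvd : n ∣ p ^ (r * d) - 1 := by
      rw [← ZMod.natCast_pow_eq_one_iff_dvd hp.pos, pow_mul, hd, pow_orderOf_eq_one]
    obtain ⟨g₁, g₂, hg₁, hg₂⟩ := exists_comp_X_pow_and_comp_X_pow_sub_X_eq (R := K) p hdvd
    have hnonconst {g f : K[X]} (h : g.comp f = (X ^ p ^ (r * d) - X) ^ n) : g.natDegree ≠ 0 :=
      left_ne_zero_of_mul (by rwa [← natDegree_comp, h])
    exact ⟨g₁, g₂, hnonconst hg₁, hnonconst hg₂, hg₁, hg₂⟩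
  · rintro h ⟨g₁, g₂, hg₁, -, rfl, h₂⟩
    rw [hdeg, hd]
    refine mul_pow_orderOf_le_natDegree hpn hr.ne' ?_ rfl h₂
    rw [natDegree_comp, natDegree_X_pow]
    exact mul_ne_zero hg₁ hn

theorem stmt_6 (K : Type*) [Field K] (p : ℕ) (hp : p.Prime) [CharP K p]
    (n r : ℕ) (hn : 0 < n) (hpn : ¬ p ∣ n) (hr : 0 < r)
    (d : ℕ) (hd : d = orderOf ((p : ZMod n) ^ r)) :
    (∃ g₁ g₂ : K[X], g₁.natDegree ≠ 0 ∧ g₂.natDegree ≠ 0 ∧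
      g₁.comp (X ^ n) = (X ^ (p ^ (r * d)) - X) ^ n ∧
      g₂.comp (X ^ (p ^ r) - X) = (X ^ (p ^ (r * d)) - X) ^ n) ∧
    ∀ h : K[X], (∃ g₁ g₂ : K[X], g₁.natDegree ≠ 0 ∧ g₂.natDegree ≠ 0 ∧
        g₁.comp (X ^ n) = h ∧ g₂.comp (X ^ (p ^ r) - X) = h) →
      ((X ^ (p ^ (r * d)) - X) ^ n : K[X]).natDegree ≤ h.natDegree :=
  stmt_6_general K p hp n r hpn hr d hd
end

section
/- Let K be a field of characteristic p > 0. Any two polynomials f₁, f₂ ∈ K[x] of degree 2 have a common composite of degree 2p. -/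
/-!
For odd `p`, an affine change of variables turns `fᵢ` into `(X + dᵢ) ^ 2`. The additive
polynomial `φ = X ^ p - e ^ (p - 1) X` satisfies `φ (X + e) = φ X`, so for `e = d₁ - d₂` the
polynomial `φ (X + d₁) ^ 2 = φ (X + d₂) ^ 2` has degree `2p`; as `φ` is odd, `φ ^ 2` is a
polynomial in `X ^ 2`, hence this is a composite of both `(X + dᵢ) ^ 2`.
For `p = 2` explicit quadratics `g₁, g₂` work, because squaring is additive up to cross terms
carrying a factor `2`.
-/

open Polynomial

section CommRing

variable {R : Type*} [CommRing R]

theorem eq_quadratic_of_natDegree_le_two {f : R[X]} (hf : f.natDegree ≤ 2) :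
    f = C (f.coeff 2) * X ^ 2 + C (f.coeff 1) * X + C (f.coeff 0) := by
  ext (_ | _ | _ | n)
  · simp
  · simp
  · simp [coeff_X_pow]
  · rw [coeff_eq_zero_of_natDegree_lt (by omega)]
    simp

theorem exists_eq_quadratic_of_natDegree_eq_two {f : R[X]} (hf : f.natDegree = 2) :
    ∃ a b c : R, a ≠ 0 ∧ f = C a * X ^ 2 + C b * X + C c := by
  refine ⟨f.coeff 2, f.coeff 1, f.coeff 0, ?_, eq_quadratic_of_natDegree_le_two hf.le⟩
  rw [← hf]
  exact leadingCoeff_ne_zero.mpr (ne_zero_of_natDegree_gt (n := 0) (by omega))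

theorem X_pow_sub_C_mul_X_comp_X_add_C_self (p : ℕ) [ExpChar R p] (e : R) :
    ((X : R[X]) ^ p - C (e ^ (p - 1)) * X).comp (X + C e) = X ^ p - C (e ^ (p - 1)) * X := by
  have hp := expChar_pos R p
  have he : e ^ (p - 1) * e = e ^ p := by rw [← pow_succ, Nat.sub_add_cancel hp]
  simp only [sub_comp, pow_comp, mul_comp, X_comp, C_comp, add_pow_expChar, ← C_pow]
  rw [← he, C_mul]
  ring

theorem X_pow_sub_C_mul_X_comp_X_add_C_eq_comp (p : ℕ) [ExpChar R p] (d₁ d₂ : R) :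
    ((X : R[X]) ^ p - C ((d₁ - d₂) ^ (p - 1)) * X).comp (X + C d₁) =
      ((X : R[X]) ^ p - C ((d₁ - d₂) ^ (p - 1)) * X).comp (X + C d₂) := by
  have htrans : (X : R[X]) + C d₁ = (X + C (d₁ - d₂)).comp (X + C d₂) := by
    rw [add_comp, X_comp, C_comp, C_sub]; ring
  rw [htrans, ← comp_assoc, X_pow_sub_C_mul_X_comp_X_add_C_self]

theorem X_mul_sq_comp_sq (k : ℕ) (u : R) (q : R[X]) :
    (X * (X ^ k - C u) ^ 2).comp (q ^ 2) = ((X ^ (2 * k + 1) - C u * X).comp q) ^ 2 := by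
  simp only [mul_comp, pow_comp, sub_comp, X_comp, C_comp]
  ring

theorem natDegree_X_pow_sub_C_mul_X [Nontrivial R] {n : ℕ} (hn : 1 < n) (u : R) :
    ((X : R[X]) ^ n - C u * X).natDegree = n := by
  rw [natDegree_sub_eq_left_of_natDegree_lt] <;> rw [natDegree_X_pow]
  exact (natDegree_C_mul_le u X).trans_lt (by rwa [natDegree_X])

end CommRing

section Field

variable {K : Type*} [Field K]

theorem exists_comp_eq_sq_X_add_C (h2 : (2 : K) ≠ 0) {f : K[X]} (hf : f.natDegree = 2) :
    ∃ (l : K[X]) (d : K), l.comp f = (X + C d) ^ 2 := by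
  obtain ⟨a, b, c, ha, rfl⟩ := exists_eq_quadratic_of_natDegree_eq_two hf
  refine ⟨C a⁻¹ * (X - C c) + C ((b / (2 * a)) ^ 2), b / (2 * a), ?_⟩
  have hlead : a⁻¹ * a = 1 := inv_mul_cancel₀ ha
  have hlin : a⁻¹ * b = 2 * (b / (2 * a)) := by field_simp
  calc (C a⁻¹ * (X - C c) + C ((b / (2 * a)) ^ 2)).comp (C a * X ^ 2 + C b * X + C c)
      = C (a⁻¹ * a) * X ^ 2 + C (a⁻¹ * b) * X + C ((b / (2 * a)) ^ 2) := by
        simp only [add_comp, sub_comp, mul_comp, C_comp, X_comp, C_mul]; ring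
    _ = (X + C (b / (2 * a))) ^ 2 := by
        rw [hlead, hlin, C_1, C_mul, C_pow, C_ofNat]; ring

theorem exists_common_composite_of_charP_two [CharP K 2] {f₁ f₂ : K[X]}
    (hf₁ : f₁.natDegree = 2) (hf₂ : f₂.natDegree = 2) :
    ∃ g₁ g₂ : K[X], g₁.comp f₁ = g₂.comp f₂ ∧ (g₁.comp f₁).natDegree = 2 * 2 := by
  obtain ⟨a₁, b₁, c₁, ha₁, rfl⟩ := exists_eq_quadratic_of_natDegree_eq_two hf₁
  obtain ⟨a₂, b₂, c₂, ha₂, rfl⟩ := exists_eq_quadratic_of_natDegree_eq_two hf₂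
  set u := a₁ * b₂ + a₂ * b₁
  refine ⟨C (a₂ ^ 2) * X ^ 2 + C (b₂ * u) * X + C (a₁ ^ 2 * c₂ ^ 2 + b₁ * u * c₂),
    C (a₁ ^ 2) * X ^ 2 + C (b₁ * u) * X + C (a₂ ^ 2 * c₁ ^ 2 + b₂ * u * c₁), ?_, ?_⟩
  · -- The two composites differ only by the cross terms of the squares `f₁ ^ 2`, `f₂ ^ 2`.
    have h2 : (2 : K[X]) = 0 := CharTwo.two_eq_zero
    simp only [add_comp, mul_comp, C_comp, X_comp, pow_comp, u, map_add, map_mul, map_pow]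
    linear_combination (C a₂ ^ 2 * (C b₁ * C c₁ * X + C a₁ * C c₁ * X ^ 2 + C a₁ * C b₁ * X ^ 3)
      - C a₁ ^ 2 * (C b₂ * C c₂ * X + C a₂ * C c₂ * X ^ 2 + C a₂ * C b₂ * X ^ 3)) * h2
  · rw [natDegree_comp, natDegree_quadratic (pow_ne_zero 2 ha₂), natDegree_quadratic ha₁]

theorem exists_common_composite_of_ne_two {p : ℕ} (hp : p.Prime) (hp2 : p ≠ 2) [CharP K p]
    {f₁ f₂ : K[X]} (hf₁ : f₁.natDegree = 2) (hf₂ : f₂.natDegree = 2) :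
    ∃ g₁ g₂ : K[X], g₁.comp f₁ = g₂.comp f₂ ∧ (g₁.comp f₁).natDegree = 2 * p := by
  have := Fact.mk hp
  have h2 : (2 : K) ≠ 0 := Ring.two_ne_zero (by rwa [ringChar.eq K p])
  obtain ⟨l₁, d₁, hl₁⟩ := exists_comp_eq_sq_X_add_C h2 hf₁
  obtain ⟨l₂, d₂, hl₂⟩ := exists_comp_eq_sq_X_add_C h2 hf₂
  obtain ⟨k, rfl⟩ : Odd p := hp.odd_of_ne_two hp2
  set ψ : K[X] := X * (X ^ k - C ((d₁ - d₂) ^ (2 * k + 1 - 1))) ^ 2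
  refine ⟨ψ.comp l₁, ψ.comp l₂, ?_, ?_⟩
  · rw [comp_assoc, hl₁, comp_assoc, hl₂, X_mul_sq_comp_sq, X_mul_sq_comp_sq,
      X_pow_sub_C_mul_X_comp_X_add_C_eq_comp]
  · rw [comp_assoc, hl₁, X_mul_sq_comp_sq, natDegree_pow, natDegree_comp,
      natDegree_X_pow_sub_C_mul_X hp.one_lt, natDegree_X_add_C]
    ring

end Field

theorem stmt_8 (K : Type*) [Field K] (p : ℕ) (hp : p.Prime) [CharP K p]
    (f₁ f₂ : K[X]) (hf₁ : f₁.natDegree = 2) (hf₂ : f₂.natDegree = 2) :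
    ∃ g₁ g₂ : K[X], g₁.natDegree ≠ 0 ∧ g₂.natDegree ≠ 0 ∧
      g₁.comp f₁ = g₂.comp f₂ ∧ (g₁.comp f₁).natDegree = 2 * p := by
  obtain ⟨g₁, g₂, hcomp, hdeg⟩ :
      ∃ g₁ g₂ : K[X], g₁.comp f₁ = g₂.comp f₂ ∧ (g₁.comp f₁).natDegree = 2 * p := by
    rcases eq_or_ne p 2 with rfl | hp2
    · exact exists_common_composite_of_charP_two hf₁ hf₂
    · exact exists_common_composite_of_ne_two hp hp2 hf₁ hf₂
  have hp0 := hp.pos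
  refine ⟨g₁, g₂, fun h ↦ ?_, fun h ↦ ?_, hcomp, hdeg⟩
  · rw [natDegree_comp, h] at hdeg; omega
  · rw [hcomp, natDegree_comp, h] at hdeg; omega
end

section
/- Let K be a field of characteristic p and a ≠ b elements of K. Then f₁ = x² + ax and f₂ = x² + bx have a common composite of degree 2p over K, and no common composite of degree less than 2p. (Equivalently: 1, f₁, f₂, f₁², f₂², …, f₁ⁿ, f₂ⁿ are linearly dependent over K if and only if n ≥ p.) -/
/-!
Write `f_a = X² + aX`. It is invariant under the involution `σ_a : X ↦ -X - a`, hence so is every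
composite `g ∘ f_a`. A common composite `h` of `f_a` and `f_b` is therefore invariant under
`σ_b ∘ σ_a`, the translation `X ↦ X + (a - b)`; comparing the coefficients of `X ^ (n - 1)` in
`h (X + c) = h` shows that `p` divides `n = deg h`. Since `n = 2 deg g₁`, and `n = 2` would force
`a = b`, this gives `n ≥ 2p`.

Conversely, for odd `p` the additive polynomial `L = X ^ p - (a - b) ^ (p - 1) X` satisfies
`L ∘ σ_e = -L - L(e)`, and `L(a) = L(b) =: t` because `L(a - b) = 0`. So `L (L + t)`, of degree
`2p`, is invariant under `σ_a` and `σ_b`; in characteristic `≠ 2` a `σ_a`-invariant polynomial is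
a polynomial in `f_a`, since `σ_a` is `u ↦ -u` in the variable `u = X + a/2` and `f_a = u² - a²/4`.
For `p = 2` an explicit pair of quadratics works.
-/

open Polynomial

theorem Nat.Prime.le_of_dvd_two_mul {p m : ℕ} (hp : p.Prime) (hm : 2 ≤ m) (h : p ∣ 2 * m) :
    p ≤ m := by
  rcases hp.dvd_mul.1 h with h2 | hpm
  · exact (Nat.le_of_dvd two_pos h2).trans hm
  · exact Nat.le_of_dvd (by omega) hpm

namespace Polynomial

theorem coeff_taylor_natDegree_sub_one {R : Type*} [CommSemiring R] (r : R) (f : R[X]) :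
    (taylor r f).coeff (f.natDegree - 1) =
      f.coeff (f.natDegree - 1) + f.natDegree * f.leadingCoeff * r := by
  rcases hn : f.natDegree with _ | m
  · rw [taylor_coeff_zero, eq_C_of_natDegree_eq_zero hn]
    simp
  have hD : hasseDeriv m f = C (f.coeff m) + C ((m + 1 : ℕ) * f.coeff (m + 1)) * X := by
    ext (_ | _ | j) <;> rw [hasseDeriv_coeff]
    · simp
    · simp [add_comm 1 m, Nat.choose_succ_self_right]
    · simp [coeff_eq_zero_of_natDegree_lt (show f.natDegree < j + 2 + m by omega), coeff_one]
  simp [taylor_coeff, hD, leadingCoeff, hn]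

section CommRing

variable {R : Type*} [CommRing R]

theorem natDegree_dvd_of_comp_X_add_C_eq [NoZeroDivisors R] (p : ℕ) [CharP R p] {c : R}
    (hc : c ≠ 0) {h : R[X]} (hh : h.comp (X + C c) = h) : p ∣ h.natDegree := by
  rcases eq_or_ne h 0 with rfl | h0
  · simp
  have key := coeff_taylor_natDegree_sub_one c h
  rw [taylor_apply, hh, left_eq_add] at key
  have hn : (h.natDegree : R) = 0 := by simpa [h0, hc] using key
  exact (CharP.cast_eq_zero_iff R p _).1 hn

theorem X_sq_add_C_mul_X_comp_neg_X_sub_C (a : R) :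
    (X ^ 2 + C a * X).comp (-X - C a) = X ^ 2 + C a * X := by
  simp only [add_comp, pow_comp, mul_comp, C_comp, X_comp]
  ring

theorem comp_X_sq_add_C_mul_X_comp_neg_X_sub_C (g : R[X]) (a : R) :
    (g.comp (X ^ 2 + C a * X)).comp (-X - C a) = g.comp (X ^ 2 + C a * X) := by
  rw [comp_assoc, X_sq_add_C_mul_X_comp_neg_X_sub_C]

theorem comp_X_add_C_sub_eq_of_comp_neg_X_sub_C_eq {h : R[X]} {a b : R}
    (ha : h.comp (-X - C a) = h) (hb : h.comp (-X - C b) = h) :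
    h.comp (X + C (a - b)) = h := by
  have hσ : (-X - C b).comp (-X - C a) = X + C (a - b) := by
    simp only [sub_comp, neg_comp, X_comp, C_comp, map_sub]
    ring
  rw [← hσ, ← comp_assoc, hb, ha]

theorem coeff_one_comp_X_sq_add_C_mul_X_of_natDegree_le_one {g : R[X]} (hg : g.natDegree ≤ 1)
    (a : R) :
    (g.comp (X ^ 2 + C a * X)).coeff 1 = a * (g.comp (X ^ 2 + C a * X)).coeff 2 := by
  rw [eq_X_add_C_of_natDegree_le_one hg]
  simp [coeff_C]
  ring

theorem X_pow_sub_C_mul_X_comp_neg_X_sub_C {p : ℕ} [Fact p.Prime] [CharP R p] (hp : Odd p)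
    (d e : R) :
    (X ^ p - C d * X).comp (-X - C e) = -(X ^ p - C d * X) - C (e ^ p - d * e) := by
  have : (-X - C e : R[X]) = -(X + C e) := by ring
  rw [sub_comp, pow_comp, mul_comp, C_comp, X_comp, this, hp.neg_pow, add_pow_char, ← C_pow]
  simp only [map_sub, map_mul]
  ring

theorem expand_contract_two_of_comp_neg_X_eq [NoZeroDivisors R] (h2 : (2 : R) ≠ 0) {h : R[X]}
    (hh : h.comp (-X) = h) : expand R 2 (contract 2 h) = h := by
  ext n
  rw [coeff_expand two_pos, coeff_contract two_ne_zero]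
  split_ifs with hn
  · rw [Nat.div_mul_cancel hn]
  · have hcoeff := congrArg (coeff · n) hh
    rw [show (-X : R[X]) = C (-1) * X by simp, comp_C_mul_X_coeff,
      Odd.neg_one_pow (Nat.odd_iff.2 (Nat.two_dvd_ne_zero.1 hn))] at hcoeff
    have : 2 * h.coeff n = 0 := by linear_combination -hcoeff
    exact ((mul_eq_zero.1 this).resolve_left h2).symm

end CommRing

section IsDomain

variable {R : Type*} [CommRing R] [IsDomain R]

theorem natDegree_X_sq_add_C_mul_X (a : R) : (X ^ 2 + C a * X).natDegree = 2 := by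
  compute_degree!

theorem natDegree_comp_X_sq_add_C_mul_X (g : R[X]) (a : R) :
    (g.comp (X ^ 2 + C a * X)).natDegree = 2 * g.natDegree := by
  rw [natDegree_comp, natDegree_X_sq_add_C_mul_X, mul_comm]

theorem natDegree_comp_ne_two_of_comp_eq_comp {a b : R} (hab : a ≠ b) {g₁ g₂ : R[X]}
    (h : g₁.comp (X ^ 2 + C a * X) = g₂.comp (X ^ 2 + C b * X)) :
    (g₁.comp (X ^ 2 + C a * X)).natDegree ≠ 2 := by
  intro h2
  have hg₁ : g₁.natDegree ≤ 1 := by rw [natDegree_comp_X_sq_add_C_mul_X] at h2; omega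
  have hg₂ : g₂.natDegree ≤ 1 := by rw [h, natDegree_comp_X_sq_add_C_mul_X] at h2; omega
  have hlc : (g₁.comp (X ^ 2 + C a * X)).coeff 2 ≠ 0 := by
    have hne := ne_zero_of_natDegree_gt (by omega : 1 < (g₁.comp (X ^ 2 + C a * X)).natDegree)
    rwa [← leadingCoeff_ne_zero, leadingCoeff, h2] at hne
  have ha := coeff_one_comp_X_sq_add_C_mul_X_of_natDegree_le_one hg₁ a
  have hb := coeff_one_comp_X_sq_add_C_mul_X_of_natDegree_le_one hg₂ b
  rw [← h] at hb
  exact hab (mul_right_cancel₀ hlc (ha.symm.trans hb))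

theorem two_mul_le_natDegree_of_comp_eq_comp {p : ℕ} (hp : p.Prime) [CharP R p] {a b : R}
    (hab : a ≠ b) {g₁ g₂ : R[X]} (hg₁ : g₁.natDegree ≠ 0)
    (h : g₁.comp (X ^ 2 + C a * X) = g₂.comp (X ^ 2 + C b * X)) :
    2 * p ≤ (g₁.comp (X ^ 2 + C a * X)).natDegree := by
  have hb := comp_X_sq_add_C_mul_X_comp_neg_X_sub_C g₂ b
  rw [← h] at hb
  have hdvd := natDegree_dvd_of_comp_X_add_C_eq p (sub_ne_zero.2 hab)
    (comp_X_add_C_sub_eq_of_comp_neg_X_sub_C_eq (comp_X_sq_add_C_mul_X_comp_neg_X_sub_C g₁ a) hb)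
  have hne := natDegree_comp_ne_two_of_comp_eq_comp hab h
  rw [natDegree_comp_X_sq_add_C_mul_X] at hdvd hne ⊢
  exact Nat.mul_le_mul_left 2 (hp.le_of_dvd_two_mul (by omega) hdvd)

end IsDomain

section Field

variable {K : Type*} [Field K]

theorem exists_comp_X_sq_add_C_mul_X_eq (h2 : (2 : K) ≠ 0) {a : K} {h : K[X]}
    (hh : h.comp (-X - C a) = h) : ∃ g : K[X], g.comp (X ^ 2 + C a * X) = h := by
  obtain ⟨s, rfl⟩ : ∃ s, a = 2 * s := ⟨a / 2, (mul_div_cancel₀ a h2).symm⟩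
  set h' := h.comp (X - C s)
  have hh' : h'.comp (-X) = h' := by
    calc h'.comp (-X) = h.comp (-X - C s) := by simp [h', comp_assoc]
      _ = (h.comp (-X - C (2 * s))).comp (X - C s) := by
          rw [comp_assoc]
          congr 1
          rw [sub_comp, neg_comp, X_comp, C_comp, map_mul, map_ofNat]
          ring
      _ = h' := by rw [hh]
  refine ⟨(contract 2 h').comp (X + C (s ^ 2)), ?_⟩
  calc ((contract 2 h').comp (X + C (s ^ 2))).comp (X ^ 2 + C (2 * s) * X)
      = (expand K 2 (contract 2 h')).comp (X + C s) := by
        rw [expand_eq_comp_X_pow, comp_assoc, comp_assoc]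
        congr 1
        simp only [add_comp, X_comp, C_comp, pow_comp, map_mul, map_pow, map_ofNat]
        ring
    _ = h := by
        rw [expand_contract_two_of_comp_neg_X_eq h2 hh', comp_assoc]
        simp

theorem exists_comp_eq_comp_natDegree_eq_of_odd {p : ℕ} [hp : Fact p.Prime] [CharP K p]
    (hodd : Odd p) (a b : K) :
    ∃ g₁ g₂ : K[X], g₁.comp (X ^ 2 + C a * X) = g₂.comp (X ^ 2 + C b * X) ∧
      (g₁.comp (X ^ 2 + C a * X)).natDegree = 2 * p := by
  set d := (a - b) ^ (p - 1)
  set t := a ^ p - d * a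
  have htb : b ^ p - d * b = t := by
    have : d * (a - b) = (a - b) ^ p := pow_sub_one_mul hp.out.ne_zero (a - b)
    linear_combination this + sub_pow_char a b
  set L : K[X] := X ^ p - C d * X
  have hH : ∀ e, e ^ p - d * e = t → (L * (L + C t)).comp (-X - C e) = L * (L + C t) := by
    intro e he
    rw [mul_comp, add_comp, C_comp, X_pow_sub_C_mul_X_comp_neg_X_sub_C hodd, he]
    ring
  have h2 : (2 : K) ≠ 0 := Ring.two_ne_zero <| by
    rw [ringChar.eq K p]
    rintro rfl
    exact Nat.not_even_iff_odd.2 hodd even_two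
  obtain ⟨g₁, hg₁⟩ := exists_comp_X_sq_add_C_mul_X_eq h2 (hH a rfl)
  obtain ⟨g₂, hg₂⟩ := exists_comp_X_sq_add_C_mul_X_eq h2 (hH b htb)
  refine ⟨g₁, g₂, hg₁.trans hg₂.symm, ?_⟩
  rw [hg₁]
  have := hp.out.two_le
  simp only [L]
  compute_degree! <;> simp [show 1 ≤ p by omega, show ¬p ≤ 1 by omega] <;> omega

theorem exists_comp_eq_comp_natDegree_eq_of_two [CharP K 2] (a b : K) :
    ∃ g₁ g₂ : K[X], g₁.comp (X ^ 2 + C a * X) = g₂.comp (X ^ 2 + C b * X) ∧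
      (g₁.comp (X ^ 2 + C a * X)).natDegree = 2 * 2 := by
  refine ⟨X ^ 2 + C (b * (a + b)) * X, X ^ 2 + C (a * (a + b)) * X, ?_, ?_⟩
  · have h2 : (2 : K[X]) = 0 := CharP.ofNat_eq_zero K[X] 2
    simp only [add_comp, pow_comp, mul_comp, C_comp, X_comp, map_mul, map_add]
    linear_combination (C a - C b) * X ^ 3 * h2
  · rw [natDegree_comp_X_sq_add_C_mul_X, natDegree_X_sq_add_C_mul_X]

theorem exists_comp_eq_comp_natDegree_eq_two_mul {p : ℕ} (hp : p.Prime) [CharP K p] (a b : K) :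
    ∃ g₁ g₂ : K[X], g₁.comp (X ^ 2 + C a * X) = g₂.comp (X ^ 2 + C b * X) ∧
      (g₁.comp (X ^ 2 + C a * X)).natDegree = 2 * p := by
  have := Fact.mk hp
  rcases hp.eq_two_or_odd' with rfl | hodd
  · exact exists_comp_eq_comp_natDegree_eq_of_two a b
  · exact exists_comp_eq_comp_natDegree_eq_of_odd hodd a b

end Field

end Polynomial

theorem stmt_9 (K : Type*) [Field K] (p : ℕ) (hp : p.Prime) [CharP K p]
    (a b : K) (hab : a ≠ b) :
    (∃ g₁ g₂ : K[X], g₁.natDegree ≠ 0 ∧ g₂.natDegree ≠ 0 ∧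
      g₁.comp (X ^ 2 + C a * X) = g₂.comp (X ^ 2 + C b * X) ∧
      (g₁.comp (X ^ 2 + C a * X)).natDegree = 2 * p) ∧
    (∀ g₁ g₂ : K[X], g₁.natDegree ≠ 0 → g₂.natDegree ≠ 0 →
      g₁.comp (X ^ 2 + C a * X) = g₂.comp (X ^ 2 + C b * X) →
      2 * p ≤ (g₁.comp (X ^ 2 + C a * X)).natDegree) := by
  refine ⟨?_, fun g₁ g₂ hg₁ _ h ↦ two_mul_le_natDegree_of_comp_eq_comp hp hab hg₁ h⟩
  obtain ⟨g₁, g₂, h, hdeg⟩ := exists_comp_eq_comp_natDegree_eq_two_mul hp a b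
  have := hp.pos
  refine ⟨g₁, g₂, ?_, ?_, h, hdeg⟩
  · rw [natDegree_comp_X_sq_add_C_mul_X] at hdeg
    omega
  · rw [h, natDegree_comp_X_sq_add_C_mul_X] at hdeg
    omega
end

section
/- Let f₁ = x² − x and f₂ = x³ − x² over a field K. Then f₁ and f₂ have no common composite, i.e., there are no nonconstant u, v ∈ K[x] with u ∘ f₁ = v ∘ f₂. -/
/-!
If `w` vanishes at `0` to order `m`, then `w ∘ f` vanishes at every root `a` of `f` to order
`m · mult_a f`. Subtracting the common value `u(0) = v(0)` from `u` and `v`, whose orders at `0`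
then are some `m₁, m₂ > 0`, a common composite `u ∘ f₁ = v ∘ f₂` therefore forces
`mult_a f₁ : mult_a f₂` to be the same ratio `m₂ : m₁` at every common root `a`.
For `f₁ = x(x - 1)` and `f₂ = x²(x - 1)` the ratios at `0` and `1` are `1 : 2` and `1 : 1`.
-/

open Polynomial

namespace Polynomial

variable {R : Type*} [CommRing R]

theorem sub_C_ne_zero_of_natDegree_ne_zero {p : R[X]} (hp : p.natDegree ≠ 0) (c : R) :
    p - C c ≠ 0 :=
  sub_ne_zero.2 fun h => hp (h ▸ natDegree_C c)

variable [IsDomain R]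

theorem rootMultiplicity_pow {p : R[X]} (hp : p ≠ 0) (a : R) (n : ℕ) :
    (p ^ n).rootMultiplicity a = n * p.rootMultiplicity a := by
  induction n with
  | zero => simp
  | succ n ih =>
    rw [pow_succ, rootMultiplicity_mul (mul_ne_zero (pow_ne_zero n hp) hp), ih, Nat.succ_mul]

theorem rootMultiplicity_comp_of_isRoot {p q : R[X]} (hp : p ≠ 0) (hq : q ≠ 0) {a : R}
    (ha : q.IsRoot a) :
    (p.comp q).rootMultiplicity a = p.rootMultiplicity 0 * q.rootMultiplicity a := by
  obtain ⟨s, hps, hs⟩ := p.exists_eq_pow_rootMultiplicity_mul_and_not_dvd hp 0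
  have hsq : ¬ (s.comp q).IsRoot a := by
    rwa [IsRoot, eval_comp, ha.eq_zero, ← IsRoot, ← dvd_iff_isRoot]
  have hpq : p.comp q = q ^ p.rootMultiplicity 0 * s.comp q := by
    conv_lhs => rw [hps]
    simp [mul_comp]
  have hsq₀ : s.comp q ≠ 0 := fun h => hsq (by simp [h])
  rw [hpq, rootMultiplicity_mul (mul_ne_zero (pow_ne_zero _ hq) hsq₀), rootMultiplicity_pow hq,
    rootMultiplicity_eq_zero hsq, add_zero]

theorem rootMultiplicity_mul_eq_of_comp_eq {u v f g : R[X]} (hu : u.natDegree ≠ 0)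
    (hv : v.natDegree ≠ 0) (hf : f ≠ 0) (hg : g ≠ 0) (h : u.comp f = v.comp g) {a b : R}
    (hfa : f.IsRoot a) (hga : g.IsRoot a) (hfb : f.IsRoot b) (hgb : g.IsRoot b) :
    f.rootMultiplicity a * g.rootMultiplicity b = f.rootMultiplicity b * g.rootMultiplicity a := by
  set c := u.eval 0
  have hvc : v.eval 0 = c := by
    simpa [eval_comp, hfa.eq_zero, hga.eq_zero] using congrArg (eval a) h.symm
  have hw₁ := sub_C_ne_zero_of_natDegree_ne_zero hu c
  have hw₂ := sub_C_ne_zero_of_natDegree_ne_zero hv c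
  have hw : (u - C c).comp f = (v - C c).comp g := by simp only [sub_comp, C_comp, h]
  have hm₁ : 0 < (u - C c).rootMultiplicity 0 := (rootMultiplicity_pos hw₁).2 (by simp [c])
  have hm₂ : 0 < (v - C c).rootMultiplicity 0 := (rootMultiplicity_pos hw₂).2 (by simp [hvc])
  have hmult {x : R} (hfx : f.IsRoot x) (hgx : g.IsRoot x) :
      (u - C c).rootMultiplicity 0 * f.rootMultiplicity x =
        (v - C c).rootMultiplicity 0 * g.rootMultiplicity x := by
    rw [← rootMultiplicity_comp_of_isRoot hw₁ hf hfx, ← rootMultiplicity_comp_of_isRoot hw₂ hg hgx,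
      hw]
  apply Nat.eq_of_mul_eq_mul_left (mul_pos hm₁ hm₂)
  calc _ = (u - C c).rootMultiplicity 0 * f.rootMultiplicity a *
          ((v - C c).rootMultiplicity 0 * g.rootMultiplicity b) := by ring
    _ = (v - C c).rootMultiplicity 0 * g.rootMultiplicity a *
          ((u - C c).rootMultiplicity 0 * f.rootMultiplicity b) := by
        rw [hmult hfa hga, ← hmult hfb hgb]
    _ = _ := by ring

theorem X_pow_mul_X_sub_one_ne_zero (n : ℕ) : (X ^ n * (X - 1) : R[X]) ≠ 0 :=
  mul_ne_zero (pow_ne_zero n X_ne_zero) (X_sub_C_ne_zero 1)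

theorem rootMultiplicity_zero_X_pow_mul_X_sub_one (n : ℕ) :
    (X ^ n * (X - 1) : R[X]).rootMultiplicity 0 = n := by
  rw [rootMultiplicity_mul (X_pow_mul_X_sub_one_ne_zero n), ← sub_zero X, ← C_0,
    rootMultiplicity_X_sub_C_pow, rootMultiplicity_eq_zero (by simp)]
  simp

theorem rootMultiplicity_one_X_pow_mul_X_sub_one (n : ℕ) :
    (X ^ n * (X - 1) : R[X]).rootMultiplicity 1 = 1 := by
  rw [rootMultiplicity_mul (X_pow_mul_X_sub_one_ne_zero n), ← C_1,
    rootMultiplicity_X_sub_C_self, rootMultiplicity_eq_zero (by simp)]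

end Polynomial

theorem stmt_13 (K : Type*) [Field K] :
    ¬ ∃ u v : K[X], u.natDegree ≠ 0 ∧ v.natDegree ≠ 0 ∧
      u.comp (X ^ 2 - X) = v.comp (X ^ 3 - X ^ 2) := by
  rintro ⟨u, v, hu, hv, h⟩
  have hf₁ : (X ^ 2 - X : K[X]) = X ^ 1 * (X - 1) := by ring
  have hf₂ : (X ^ 3 - X ^ 2 : K[X]) = X ^ 2 * (X - 1) := by ring
  rw [hf₁, hf₂] at h
  have := rootMultiplicity_mul_eq_of_comp_eq hu hv (X_pow_mul_X_sub_one_ne_zero 1)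
    (X_pow_mul_X_sub_one_ne_zero 2) h (a := 0) (b := 1) (by simp) (by simp) (by simp) (by simp)
  simp only [rootMultiplicity_zero_X_pow_mul_X_sub_one,
    rootMultiplicity_one_X_pow_mul_X_sub_one] at this
  omega
end

section
/- Over K = F₂, the polynomials f₁ = x² + x and f₂ = x³ + x² have no common composite. -/
/-!
A common composite `h = u ∘ (X² + X)` is invariant under `X ↦ X + 1`, and over `𝔽₂` the
substitution `X ↦ X + 1` sends `X³ + X²` to `X³ + X`; hence `v ∘ (X³ + X²) = v ∘ (X³ + X)`.
If `v - v(0)` vanishes to order `m` at `0`, the two sides vanish to orders `2m` and `m`,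
so `m = 0` and `v` is constant.
-/

open Polynomial

section

variable {R : Type*} [CommRing R] [NoZeroDivisors R]

theorem natTrailingDegree_pow (p : R[X]) (n : ℕ) :
    (p ^ n).natTrailingDegree = n * p.natTrailingDegree := by
  rcases eq_or_ne p 0 with rfl | hp
  · cases n <;> simp
  induction n with
  | zero => simp
  | succ n ih => rw [pow_succ, natTrailingDegree_mul (pow_ne_zero n hp) hp, ih, add_one_mul]

theorem natTrailingDegree_comp_of_coeff_zero_eq_zero {p q : R[X]} (hq : q.coeff 0 = 0) :
    (p.comp q).natTrailingDegree = p.natTrailingDegree * q.natTrailingDegree := by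
  rcases eq_or_ne p 0 with rfl | hp
  · simp
  rcases eq_or_ne q 0 with rfl | hq₀
  · simp
  obtain ⟨g, hpg, hg⟩ := p.exists_eq_pow_rootMultiplicity_mul_and_not_dvd hp 0
  rw [C_0, sub_zero, rootMultiplicity_eq_natTrailingDegree'] at hpg
  rw [C_0, sub_zero, X_dvd_iff] at hg
  have hg₀ : (g.comp q).coeff 0 ≠ 0 := by
    rwa [coeff_zero_eq_eval_zero, eval_comp, ← coeff_zero_eq_eval_zero q, hq,
      ← coeff_zero_eq_eval_zero]
  have hgq : g.comp q ≠ 0 := fun h => hg₀ (by rw [h, coeff_zero])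
  conv_lhs => rw [hpg]
  rw [mul_comp, X_pow_comp, natTrailingDegree_mul (pow_ne_zero _ hq₀) hgq,
    natTrailingDegree_pow, natTrailingDegree_eq_zero.2 (Or.inr hg₀), add_zero]

theorem natDegree_eq_zero_of_comp_eq_comp {p f g : R[X]} (hf : f.coeff 0 = 0)
    (hg : g.coeff 0 = 0) (hfg : f.natTrailingDegree ≠ g.natTrailingDegree)
    (h : p.comp f = p.comp g) : p.natDegree = 0 := by
  set r := p - C (p.coeff 0)
  have hr : r.comp f = r.comp g := by simp only [r, sub_comp, C_comp, h]
  have hr_trail : r.natTrailingDegree = 0 := by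
    by_contra hne
    apply hfg
    have := congrArg natTrailingDegree hr
    rwa [natTrailingDegree_comp_of_coeff_zero_eq_zero hf,
      natTrailingDegree_comp_of_coeff_zero_eq_zero hg, mul_right_inj' hne] at this
  have hr0 : r = 0 := by
    simpa [r] using natTrailingDegree_eq_zero.1 hr_trail
  rw [sub_eq_zero.1 hr0, natDegree_C]

end

theorem stmt_14 :
    ¬ ∃ u v : (ZMod 2)[X], u.natDegree ≠ 0 ∧ v.natDegree ≠ 0 ∧
      u.comp (X ^ 2 + X) = v.comp (X ^ 3 + X ^ 2) := by
  rintro ⟨u, v, -, hv, h⟩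
  have h₁ : ((X : (ZMod 2)[X]) ^ 2 + X).comp (X + 1) = X ^ 2 + X := by
    simp only [add_comp, pow_comp, X_comp]
    ring_nf
    reduce_mod_char
  have h₂ : ((X : (ZMod 2)[X]) ^ 3 + X ^ 2).comp (X + 1) = X ^ 3 + X := by
    simp only [add_comp, pow_comp, X_comp]
    ring_nf
    reduce_mod_char
  have hv' : v.comp (X ^ 3 + X ^ 2) = v.comp (X ^ 3 + X) := by
    rw [← h₂, ← comp_assoc, ← h, comp_assoc, h₁]
  have hd₂ : ((X : (ZMod 2)[X]) ^ 3 + X ^ 2).natTrailingDegree = 2 := by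
    rw [show (X : (ZMod 2)[X]) ^ 3 + X ^ 2 = (X + C 1) * X ^ 2 by simp; ring,
      natTrailingDegree_mul_X_pow (X_add_C_ne_zero 1),
      natTrailingDegree_eq_zero.2 (Or.inr (by simp))]
  have hd₁ : ((X : (ZMod 2)[X]) ^ 3 + X).natTrailingDegree = 1 := by
    rw [show (X : (ZMod 2)[X]) ^ 3 + X = (X ^ 2 + C 1) * X ^ 1 by simp; ring,
      natTrailingDegree_mul_X_pow (X_pow_add_C_ne_zero two_pos 1),
      natTrailingDegree_eq_zero.2 (Or.inr (by simp))]
  exact hv (natDegree_eq_zero_of_comp_eq_comp (by simp) (by simp) (by simp [hd₂, hd₁]) hv')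
end

section
/- Let f₁ = x² and f₂ = (x−1)² over ℚ. Then f₁ and f₂ have no common composite. (More specifically: there is no nonempty finite subset S of an algebraic closure of ℚ that is simultaneously a union of fibers of f₁ and a union of fibers of f₂.) -/
/-!
Composing the two involutions `x ↦ -x` and `x ↦ 2 - x`, which swap the two points of each
fibre of `x²` and of `(x - 1)²`, gives the translation `x ↦ x + 2`. So a nonempty set that is a
union of fibres of both maps contains `a + 2n` for all `n`, and is infinite in characteristic
zero. A common composite `u ∘ x² = v ∘ (x - 1)²` would produce such a finite set: the roots of
`u ∘ x²` in `ℚ̄`.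
-/

open Polynomial

def IsUnionOfFibers {α β : Type*} (f : α → β) (S : Set α) : Prop :=
  ∀ a ∈ S, ∀ b, f b = f a → b ∈ S

theorem isUnionOfFibers_rootSet_comp {R K : Type*} [CommRing R] [IsDomain R] [Field K]
    [Algebra R K] [Module.IsTorsionFree R K] (u f : R[X]) :
    IsUnionOfFibers (fun x : K ↦ aeval x f) ((u.comp f).rootSet K) := by
  intro a ha b hb
  rw [mem_rootSet, aeval_comp] at ha ⊢
  exact ⟨ha.1, (congrArg (aeval · u) hb).trans ha.2⟩

theorem Set.infinite_of_forall_add_mem {G : Type*} [AddGroup G] {S : Set G} {c : G}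
    (hc : ¬IsOfFinAddOrder c) (hS : S.Nonempty) (h : ∀ x ∈ S, x + c ∈ S) : S.Infinite := by
  obtain ⟨a, ha⟩ := hS
  have hmem : ∀ n : ℕ, a + n • c ∈ S := by
    intro n
    induction n with
    | zero => simpa using ha
    | succ n ih => simpa [succ_nsmul, add_assoc] using h _ ih
  refine Set.infinite_of_injective_forall_mem (fun m n hmn ↦ ?_) hmem
  exact injective_nsmul_iff_not_isOfFinAddOrder.mpr hc (add_left_cancel (a := a) hmn)

theorem not_isOfFinAddOrder_two {R : Type*} [Ring R] [CharZero R] :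
    ¬IsOfFinAddOrder (2 : R) := by
  refine injective_nsmul_iff_not_isOfFinAddOrder (x := (2 : R)).mp fun m n hmn ↦ ?_
  have : ((m * 2 : ℕ) : R) = ((n * 2 : ℕ) : R) := by push_cast; simpa [nsmul_eq_mul] using hmn
  have := Nat.cast_injective this
  omega

theorem add_two_mem_of_isUnionOfFibers {R : Type*} [CommRing R] {S : Set R}
    (h₁ : IsUnionOfFibers (· ^ 2) S) (h₂ : IsUnionOfFibers (fun x ↦ (x - 1) ^ 2) S)
    {x : R} (hx : x ∈ S) : x + 2 ∈ S :=
  h₂ (-x) (h₁ x hx (-x) (by ring)) (x + 2) (by ring)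

theorem Set.infinite_of_isUnionOfFibers_sq {R : Type*} [CommRing R] [CharZero R] {S : Set R}
    (hS : S.Nonempty) (h₁ : IsUnionOfFibers (· ^ 2) S)
    (h₂ : IsUnionOfFibers (fun x ↦ (x - 1) ^ 2) S) : S.Infinite :=
  S.infinite_of_forall_add_mem not_isOfFinAddOrder_two hS
    fun _ hx ↦ add_two_mem_of_isUnionOfFibers h₁ h₂ hx

theorem stmt_15 :
    (¬ ∃ u v : ℚ[X], u.natDegree ≠ 0 ∧ v.natDegree ≠ 0 ∧
      u.comp (X ^ 2) = v.comp ((X - 1) ^ 2)) ∧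
    ¬ ∃ S : Finset (AlgebraicClosure ℚ), S.Nonempty ∧
      (∀ a ∈ S, ∀ b : AlgebraicClosure ℚ,
        Polynomial.aeval b ((X : ℚ[X]) ^ 2) = Polynomial.aeval a ((X : ℚ[X]) ^ 2) → b ∈ S) ∧
      (∀ a ∈ S, ∀ b : AlgebraicClosure ℚ,
        Polynomial.aeval b (((X : ℚ[X]) - 1) ^ 2) = Polynomial.aeval a (((X : ℚ[X]) - 1) ^ 2) →
          b ∈ S) := by
  constructor
  · rintro ⟨u, v, hu, -, huv⟩
    set S := (u.comp (X ^ 2)).rootSet (AlgebraicClosure ℚ)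
    have h₁ := isUnionOfFibers_rootSet_comp (K := AlgebraicClosure ℚ) u (X ^ 2)
    have h₂ := isUnionOfFibers_rootSet_comp (K := AlgebraicClosure ℚ) v ((X - 1) ^ 2)
    simp only [map_pow, map_sub, aeval_X, map_one, ← huv] at h₁ h₂
    have hdeg : (u.comp (X ^ 2)).natDegree ≠ 0 := by
      simp [natDegree_comp, hu]
    have hS : S.Nonempty := by
      obtain ⟨x, hx⟩ := IsAlgClosed.exists_aeval_eq_zero (AlgebraicClosure ℚ) _
        fun h ↦ hdeg (natDegree_eq_of_degree_eq_some h)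
      exact ⟨x, mem_rootSet.mpr ⟨fun h ↦ hdeg (by simp [h]), hx⟩⟩
    exact S.infinite_of_isUnionOfFibers_sq hS h₁ h₂ (rootSet_finite _ _)
  · rintro ⟨S, hS, h₁, h₂⟩
    simp only [map_pow, map_sub, aeval_X, map_one] at h₁ h₂
    exact Set.infinite_of_isUnionOfFibers_sq hS.to_set h₁ h₂ S.finite_toSet
end

section
/- Let K be a field with algebraic closure K̄, and f₁, f₂ ∈ K[x] nonconstant. For a ∈ K̄ and i ∈ {1,2}, let m_i(a) be the multiplicity of a as a root of f_i(x) − f_i(a). Suppose A ⊆ K̄ is a nonempty finite set that is a union of f₁-fibers and a union of f₂-fibers, and ℓ : A → ℤ satisfies: (i) for each a ∈ A and i, ℓ(a)/m_i(a) is a positive integer; (ii) for a, b ∈ A with f_i(a) = f_i(b), ℓ(a)/m_i(a) = ℓ(b)/m_i(b). Then h := ∏_{a ∈ A} (x − a)^{ℓ(a)} is a common composite of f₁ and f₂ over K̄; consequently f₁ and f₂ have a common composite over K. -/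
/-!
Put `c` for the leading coefficient of `F` and `B = F(A)`. Over an algebraically closed field,
for `t ∈ B` the roots of `F - t` form the fibre of `F` over `t`, which lies in `A`, so
`F - t = c ∏_{F(b) = t} (X - b)^{m(b)}`. If `ℓ(b) = k(F(b)) m(b)` on every fibre, then
`g = ∏_{t ∈ B} (c⁻¹ (X - t))^{k(t)}` satisfies `g ∘ F = ∏_{a ∈ A} (X - a)^{ℓ(a)}`.

To descend a common composite `g₁ ∘ f₁ = g₂ ∘ f₂` from `K̄` to `K`, apply coefficientwise a
`K`-linear functional `θ : K̄ → K` not vanishing on the leading coefficient of `g₁`. Since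
`θ (a * c) = c * θ a` for `c ∈ K`, this commutes with composing on the right by polynomials
over `K`, and it keeps the degree of `g₁`.
-/

open Polynomial

theorem Function.exists_fiberwise_ratio {α β : Type*} (f : α → β) (A : Finset α) (m : α → ℕ)
    (ℓ : α → ℤ) (hpos : ∀ a ∈ A, 0 < ℓ a) (hdvd : ∀ a ∈ A, (m a : ℤ) ∣ ℓ a)
    (hcons : ∀ a ∈ A, ∀ b ∈ A, f a = f b → ℓ a * m b = ℓ b * m a) :
    ∃ k : β → ℕ, ∀ a ∈ A, k (f a) ≠ 0 ∧ (ℓ a).toNat = k (f a) * m a := by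
  have hm : ∀ a ∈ A, (m a : ℤ) ≠ 0 := fun a ha h0 => by
    have := hdvd a ha
    rw [h0, zero_dvd_iff] at this
    exact (hpos a ha).ne' this
  set r : A → ℕ := fun a => (ℓ a / m a).toNat
  have hr : r.FactorsThrough fun a => f a := fun a b hab =>
    congrArg Int.toNat <| Int.ediv_eq_ediv_of_mul_eq_mul (hdvd b b.2) (hm a a.2) (hm b b.2)
      ((hcons a a.2 b b.2 hab).trans (mul_comm _ _))
  refine ⟨Function.extend (fun a : A => f a) r 0, fun a ha => ?_⟩
  rw [hr.extend_apply _ ⟨a, ha⟩]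
  have hq : 0 < ℓ a / m a :=
    Int.ediv_pos_of_pos_of_dvd (hpos a ha) (Int.natCast_nonneg _) (hdvd a ha)
  refine ⟨by simp only [r]; omega, ?_⟩
  conv_lhs => rw [← Int.ediv_mul_cancel (hdvd a ha)]
  rw [Int.toNat_mul hq.le (Int.natCast_nonneg _), Int.toNat_natCast]

namespace Polynomial

theorem eq_C_leadingCoeff_mul_prod_of_mem_iff_isRoot {L : Type*} [Field L] [IsAlgClosed L]
    {p : L[X]} (hp : p ≠ 0) {S : Finset L} (hS : ∀ b, b ∈ S ↔ p.IsRoot b) :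
    p = C p.leadingCoeff * ∏ b ∈ S, (X - C b) ^ p.rootMultiplicity b := by
  classical
  have hS' : p.roots.toFinset = S := by ext b; simp [hS, hp]
  conv_lhs => rw [(IsAlgClosed.splits p).eq_prod_roots]
  rw [prod_multiset_root_eq_finset_root, hS']

theorem C_inv_leadingCoeff_mul_sub_C_eval_eq_prod {L : Type*} [Field L]
    [IsAlgClosed L] [DecidableEq L] {F : L[X]} (hF : F.natDegree ≠ 0) {A : Finset L} {a : L}
    (hfib : ∀ b, F.eval b = F.eval a → b ∈ A) :
    C F.leadingCoeff⁻¹ * (F - C (F.eval a)) =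
      ∏ b ∈ A with F.eval b = F.eval a, (X - C b) ^ (F - C (F.eval a)).rootMultiplicity b := by
  have hsub : F - C (F.eval a) ≠ 0 := fun h => hF (by rw [← natDegree_sub_C, h, natDegree_zero])
  have hlc : (F - C (F.eval a)).leadingCoeff = F.leadingCoeff :=
    leadingCoeff_sub_of_degree_lt <| degree_C_le.trans_lt <|
      natDegree_pos_iff_degree_pos.mp (Nat.pos_of_ne_zero hF)
  have hroots : ∀ b, b ∈ {b ∈ A | F.eval b = F.eval a} ↔ (F - C (F.eval a)).IsRoot b := by
    intro b
    simp only [Finset.mem_filter, IsRoot, eval_sub, eval_C, sub_eq_zero]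
    exact ⟨And.right, fun h => ⟨hfib b h, h⟩⟩
  conv_lhs => rw [eq_C_leadingCoeff_mul_prod_of_mem_iff_isRoot hsub hroots, hlc]
  rw [← mul_assoc, ← C_mul, inv_mul_cancel₀ (leadingCoeff_ne_zero.mpr (ne_zero_of_natDegree_gt
    (Nat.pos_of_ne_zero hF))), C_1, one_mul]

theorem exists_comp_eq_prod_of_fiberwise {L : Type*} [Field L] [IsAlgClosed L]
    {F : L[X]} (hF : F.natDegree ≠ 0) {A : Finset L} (hA : A.Nonempty)
    (hfib : ∀ a ∈ A, ∀ b, F.eval b = F.eval a → b ∈ A) {k : L → ℕ}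
    (hk : ∀ a ∈ A, k (F.eval a) ≠ 0) :
    ∃ g : L[X], g.natDegree ≠ 0 ∧
      g.comp F = ∏ a ∈ A, (X - C a) ^ (k (F.eval a) * (F - C (F.eval a)).rootMultiplicity a) := by
  classical
  set c := F.leadingCoeff
  have hc : c ≠ 0 := leadingCoeff_ne_zero.mpr (ne_zero_of_natDegree_gt (Nat.pos_of_ne_zero hF))
  refine ⟨∏ t ∈ A.image F.eval, (C c⁻¹ * (X - C t)) ^ k t, ?_, ?_⟩
  · have hlin : ∀ t, C c⁻¹ * (X - C t) ≠ 0 := fun t =>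
      mul_ne_zero (C_ne_zero.mpr (inv_ne_zero hc)) (X_sub_C_ne_zero t)
    rw [natDegree_prod _ _ fun t _ => pow_ne_zero _ (hlin t)]
    simp only [natDegree_pow, natDegree_C_mul (inv_ne_zero hc), natDegree_X_sub_C, mul_one]
    obtain ⟨a, ha⟩ := hA
    exact fun h => hk a ha (Finset.sum_eq_zero_iff.mp h _ (Finset.mem_image_of_mem _ ha))
  · calc (∏ t ∈ A.image F.eval, (C c⁻¹ * (X - C t)) ^ k t).comp F
        = ∏ t ∈ A.image F.eval, (C c⁻¹ * (F - C t)) ^ k t := by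
          simp only [prod_comp, pow_comp, mul_comp, C_comp, sub_comp, X_comp]
      _ = ∏ t ∈ A.image F.eval, ∏ b ∈ A with F.eval b = t,
            (X - C b) ^ (k (F.eval b) * (F - C (F.eval b)).rootMultiplicity b) :=
          Finset.prod_congr rfl fun t ht => by
            obtain ⟨a, ha, rfl⟩ := Finset.mem_image.mp ht
            rw [C_inv_leadingCoeff_mul_sub_C_eval_eq_prod hF (hfib a ha), ← Finset.prod_pow]
            refine Finset.prod_congr rfl fun b hb => ?_
            rw [← (Finset.mem_filter.mp hb).2, ← pow_mul, mul_comm]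
      _ = _ := Finset.prod_fiberwise_of_maps_to (fun a ha => Finset.mem_image_of_mem _ ha) _

theorem exists_comp_eq_prod_pow_toNat {L : Type*} [Field L] [IsAlgClosed L]
    {F : L[X]} (hF : F.natDegree ≠ 0) {A : Finset L} (hA : A.Nonempty)
    (hfib : ∀ a ∈ A, ∀ b, F.eval b = F.eval a → b ∈ A) {ℓ : L → ℤ} (hpos : ∀ a ∈ A, 0 < ℓ a)
    (hdvd : ∀ a ∈ A, ((F - C (F.eval a)).rootMultiplicity a : ℤ) ∣ ℓ a)
    (hcons : ∀ a ∈ A, ∀ b ∈ A, F.eval a = F.eval b →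
      ℓ a * (F - C (F.eval b)).rootMultiplicity b = ℓ b * (F - C (F.eval a)).rootMultiplicity a) :
    ∃ g : L[X], g.natDegree ≠ 0 ∧ g.comp F = ∏ a ∈ A, (X - C a) ^ (ℓ a).toNat := by
  obtain ⟨k, hk⟩ := Function.exists_fiberwise_ratio F.eval A _ ℓ hpos hdvd hcons
  obtain ⟨g, hg, hcomp⟩ := exists_comp_eq_prod_of_fiberwise hF hA hfib fun a ha => (hk a ha).1
  exact ⟨g, hg, hcomp.trans (Finset.prod_congr rfl fun a ha => by rw [(hk a ha).2])⟩

section CoeffwiseMap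

variable {K L : Type*} [CommSemiring K] [Semiring L] [Algebra K L]

noncomputable def coeffwiseMap (θ : L →ₗ[K] K) : L[X] →ₗ[K] K[X] :=
  lsum fun n => monomial n ∘ₗ θ

variable (θ : L →ₗ[K] K)

@[simp]
theorem coeff_coeffwiseMap (p : L[X]) (n : ℕ) : (coeffwiseMap θ p).coeff n = θ (p.coeff n) := by
  simp only [coeffwiseMap, lsum_apply, sum_def, finsetSum_coeff, LinearMap.comp_apply,
    coeff_monomial, Finset.sum_ite_eq']
  exact ite_eq_left_iff.mpr fun h => by rw [notMem_support_iff.mp h, map_zero]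

theorem coeffwiseMap_C_mul_map (a : L) (f : K[X]) :
    coeffwiseMap θ (C a * f.map (algebraMap K L)) = C (θ a) * f := by
  ext n
  rw [coeff_coeffwiseMap, coeff_C_mul, coeff_map, coeff_C_mul, ← Algebra.commutes,
    ← Algebra.smul_def, map_smul, smul_eq_mul, mul_comm]

theorem coeffwiseMap_comp_map (g : L[X]) (f : K[X]) :
    coeffwiseMap θ (g.comp (f.map (algebraMap K L))) = (coeffwiseMap θ g).comp f := by
  induction g using Polynomial.induction_on' with
  | add p q hp hq => rw [add_comp, map_add, map_add, hp, hq, add_comp]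
  | monomial n a =>
    have : coeffwiseMap θ (monomial n a) = monomial n (θ a) := by
      ext k; simp [coeff_monomial, apply_ite θ]
    rw [this, monomial_comp, monomial_comp, ← Polynomial.map_pow, coeffwiseMap_C_mul_map]

theorem natDegree_coeffwiseMap {g : L[X]} (hg : θ g.leadingCoeff ≠ 0) :
    (coeffwiseMap θ g).natDegree = g.natDegree :=
  natDegree_eq_of_le_of_coeff_ne_zero
    (natDegree_le_iff_coeff_eq_zero.mpr fun n hn => by
      rw [coeff_coeffwiseMap, coeff_eq_zero_of_natDegree_lt (by exact_mod_cast hn), map_zero])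
    (by rwa [coeff_coeffwiseMap])

end CoeffwiseMap

theorem exists_comp_eq_comp_of_comp_map_eq {K L : Type*} [Field K] [Ring L] [Algebra K L]
    {f₁ f₂ : K[X]} (hf₁ : f₁.natDegree ≠ 0) {g₁ g₂ : L[X]} (hg₁ : g₁.natDegree ≠ 0)
    (h : g₁.comp (f₁.map (algebraMap K L)) = g₂.comp (f₂.map (algebraMap K L))) :
    ∃ u v : K[X], u.natDegree ≠ 0 ∧ v.natDegree ≠ 0 ∧ u.comp f₁ = v.comp f₂ := by
  have hg₁0 : g₁.leadingCoeff ≠ 0 :=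
    leadingCoeff_ne_zero.mpr (ne_zero_of_natDegree_gt (Nat.pos_of_ne_zero hg₁))
  obtain ⟨θ, hθ⟩ := Module.Projective.exists_dual_ne_zero K hg₁0
  have hu : (coeffwiseMap θ g₁).natDegree ≠ 0 := by rwa [natDegree_coeffwiseMap θ hθ]
  have huv : (coeffwiseMap θ g₁).comp f₁ = (coeffwiseMap θ g₂).comp f₂ := by
    rw [← coeffwiseMap_comp_map, ← coeffwiseMap_comp_map, h]
  refine ⟨_, _, hu, fun hv => ?_, huv⟩
  have := congrArg natDegree huv
  rw [natDegree_comp, natDegree_comp, hv, zero_mul] at this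
  exact mul_ne_zero hu hf₁ this

end Polynomial

theorem stmt_16 (K : Type*) [Field K] (f₁ f₂ : K[X])
    (hf₁ : f₁.natDegree ≠ 0) (hf₂ : f₂.natDegree ≠ 0)
    (F₁ F₂ : (AlgebraicClosure K)[X])
    (hF₁ : F₁ = f₁.map (algebraMap K (AlgebraicClosure K)))
    (hF₂ : F₂ = f₂.map (algebraMap K (AlgebraicClosure K)))
    (m₁ m₂ : AlgebraicClosure K → ℕ)
    (hm₁ : ∀ a, m₁ a = (F₁ - C (F₁.eval a)).rootMultiplicity a)
    (hm₂ : ∀ a, m₂ a = (F₂ - C (F₂.eval a)).rootMultiplicity a)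
    (A : Finset (AlgebraicClosure K)) (hA : A.Nonempty)
    (hfib₁ : ∀ a ∈ A, ∀ b : AlgebraicClosure K, F₁.eval b = F₁.eval a → b ∈ A)
    (hfib₂ : ∀ a ∈ A, ∀ b : AlgebraicClosure K, F₂.eval b = F₂.eval a → b ∈ A)
    (ℓ : AlgebraicClosure K → ℤ)
    (hpos : ∀ a ∈ A, 0 < ℓ a)
    (hdvd₁ : ∀ a ∈ A, (m₁ a : ℤ) ∣ ℓ a) (hdvd₂ : ∀ a ∈ A, (m₂ a : ℤ) ∣ ℓ a)
    (hcons₁ : ∀ a ∈ A, ∀ b ∈ A, F₁.eval a = F₁.eval b → ℓ a * (m₁ b : ℤ) = ℓ b * (m₁ a : ℤ))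
    (hcons₂ : ∀ a ∈ A, ∀ b ∈ A, F₂.eval a = F₂.eval b → ℓ a * (m₂ b : ℤ) = ℓ b * (m₂ a : ℤ)) :
    (∃ g₁ g₂ : (AlgebraicClosure K)[X], g₁.natDegree ≠ 0 ∧ g₂.natDegree ≠ 0 ∧
      g₁.comp F₁ = ∏ a ∈ A, (X - C a) ^ (ℓ a).toNat ∧
      g₂.comp F₂ = ∏ a ∈ A, (X - C a) ^ (ℓ a).toNat) ∧
    ∃ u v : K[X], u.natDegree ≠ 0 ∧ v.natDegree ≠ 0 ∧ u.comp f₁ = v.comp f₂ := by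
  subst hF₁ hF₂
  obtain rfl : m₁ = _ := funext hm₁
  obtain rfl : m₂ = _ := funext hm₂
  have hF₁ : (f₁.map (algebraMap K (AlgebraicClosure K))).natDegree ≠ 0 := by
    rwa [natDegree_map]
  have hF₂ : (f₂.map (algebraMap K (AlgebraicClosure K))).natDegree ≠ 0 := by
    rwa [natDegree_map]
  obtain ⟨g₁, hg₁, hcomp₁⟩ := exists_comp_eq_prod_pow_toNat hF₁ hA hfib₁ hpos hdvd₁ hcons₁
  obtain ⟨g₂, hg₂, hcomp₂⟩ := exists_comp_eq_prod_pow_toNat hF₂ hA hfib₂ hpos hdvd₂ hcons₂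
  exact ⟨⟨g₁, g₂, hg₁, hg₂, hcomp₁, hcomp₂⟩,
    exists_comp_eq_comp_of_comp_map_eq hf₁ hg₁ (hcomp₁.trans hcomp₂.symm)⟩
end

section
/- Let K be a field and f₁, f₂ ∈ K[x] nonconstant with a common composite h ∈ K[x]. Suppose α, β ∈ K̄ satisfy h'(α) · h'(β) ≠ 0 and f_i(α) = f_i(β) for both i = 1, 2. Then f₁'(α) · f₂'(β) = f₁'(β) · f₂'(α). -/
/-! By the chain rule `h'(x) = F_i'(f_i x) · f_i'(x)`, and since `f_i α = f_i β` the factor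
`c_i = F_i'(f_i α)` is the same at `α` and `β`. So `c₁ f₁'(x) = c₂ f₂'(x)` for `x = α, β`, with
`c₁ ≠ 0` because `h'(α) ≠ 0`; eliminating the `c_i` gives the claim. -/

open Polynomial

theorem aeval_derivative_comp {R A : Type*} [CommSemiring R] [CommSemiring A] [Algebra R A]
    (x : A) (p q : R[X]) :
    aeval x (p.comp q).derivative = aeval (aeval x q) p.derivative * aeval x q.derivative := by
  rw [derivative_comp, map_mul, aeval_comp, mul_comm]

theorem mul_eq_mul_of_mul_eq_mul_of_ne_zero {R : Type*} [CommRing R] [NoZeroDivisors R]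
    {a b x y x' y' : R} (ha : a ≠ 0) (h : a * x = b * y) (h' : a * x' = b * y') :
    x * y' = x' * y := by
  have hcross : a * (x * y' - x' * y) = 0 := by linear_combination y' * h - y * h'
  exact sub_eq_zero.mp ((mul_eq_zero.mp hcross).resolve_left ha)

theorem stmt_17_general (K : Type*) [Field K] (f₁ f₂ : K[X])
    (h F₁ F₂ : K[X])
    (hcomp₁ : F₁.comp f₁ = h) (hcomp₂ : F₂.comp f₂ = h)
    (α β : AlgebraicClosure K)
    (hder : Polynomial.aeval α h.derivative * Polynomial.aeval β h.derivative ≠ 0)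
    (heq₁ : Polynomial.aeval α f₁ = Polynomial.aeval β f₁)
    (heq₂ : Polynomial.aeval α f₂ = Polynomial.aeval β f₂) :
    Polynomial.aeval α f₁.derivative * Polynomial.aeval β f₂.derivative =
      Polynomial.aeval β f₁.derivative * Polynomial.aeval α f₂.derivative := by
  set c₁ := aeval (aeval α f₁) F₁.derivative with hc₁_def
  set c₂ := aeval (aeval α f₂) F₂.derivative with hc₂_def
  have hα : c₁ * aeval α f₁.derivative = c₂ * aeval α f₂.derivative := by
    rw [← aeval_derivative_comp, ← aeval_derivative_comp, hcomp₁, hcomp₂]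
  have hβ : c₁ * aeval β f₁.derivative = c₂ * aeval β f₂.derivative := by
    rw [hc₁_def, hc₂_def, heq₁, heq₂, ← aeval_derivative_comp, ← aeval_derivative_comp,
      hcomp₁, hcomp₂]
  have hc₁ : c₁ ≠ 0 := by
    have hderα := left_ne_zero_of_mul hder
    rw [← hcomp₁, aeval_derivative_comp] at hderα
    exact left_ne_zero_of_mul hderα
  exact mul_eq_mul_of_mul_eq_mul_of_ne_zero hc₁ hα hβ

theorem stmt_17 (K : Type*) [Field K] (f₁ f₂ : K[X])
    (hf₁ : f₁.natDegree ≠ 0) (hf₂ : f₂.natDegree ≠ 0)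
    (h F₁ F₂ : K[X]) (hF₁ : F₁.natDegree ≠ 0) (hF₂ : F₂.natDegree ≠ 0)
    (hcomp₁ : F₁.comp f₁ = h) (hcomp₂ : F₂.comp f₂ = h)
    (α β : AlgebraicClosure K)
    (hder : Polynomial.aeval α h.derivative * Polynomial.aeval β h.derivative ≠ 0)
    (heq₁ : Polynomial.aeval α f₁ = Polynomial.aeval β f₁)
    (heq₂ : Polynomial.aeval α f₂ = Polynomial.aeval β f₂) :
    Polynomial.aeval α f₁.derivative * Polynomial.aeval β f₂.derivative =
      Polynomial.aeval β f₁.derivative * Polynomial.aeval α f₂.derivative :=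
  stmt_17_general K f₁ f₂ h F₁ F₂ hcomp₁ hcomp₂ α β hder heq₁ heq₂
end

section
/- Let K = F₂, f₁ = x³, f₂ = x² + x, and ω ∈ F₄ a primitive cube root of unity. Then every common composite h ∈ F₂[x] of f₁ and f₂ satisfies h'(ω) · h'(ω²) = 0. -/
open Polynomial

theorem stmt_19 (ω : AlgebraicClosure (ZMod 2)) (hω : ω ^ 2 + ω + 1 = 0)
    (h g₁ g₂ : (ZMod 2)[X]) (hg₁ : g₁.natDegree ≠ 0) (hg₂ : g₂.natDegree ≠ 0)
    (hc₁ : g₁.comp (X ^ 3) = h) (hc₂ : g₂.comp (X ^ 2 + X) = h) :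
    Polynomial.aeval ω h.derivative * Polynomial.aeval (ω ^ 2) h.derivative = 0 := by
  have h2F : (2 : AlgebraicClosure (ZMod 2)) = 0 := by
    have := map_ofNat (algebraMap (ZMod 2) (AlgebraicClosure (ZMod 2))) 2
    rw [← this, show ((2 : ZMod 2) : ZMod 2) = 0 from by decide, map_zero]
  have hω3 : ω ^ 3 = 1 := by linear_combination (ω - 1) * hω
  have h31 : ((3 : ℕ) : ZMod 2) = 1 := by decide
  have h21 : ((2 : ℕ) : ZMod 2) = 0 := by decide
  have hone : (1 : AlgebraicClosure (ZMod 2))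
      = algebraMap (ZMod 2) (AlgebraicClosure (ZMod 2)) 1 := (map_one _).symm
  have key1 : aeval ω h.derivative =
      algebraMap (ZMod 2) (AlgebraicClosure (ZMod 2)) (g₁.derivative.eval 1) * ω ^ 2 := by
    rw [← hc₁, derivative_comp]
    simp only [derivative_X_pow, map_mul, aeval_comp, map_pow, aeval_X, aeval_C, h31]
    rw [show (3:ℕ) - 1 = 2 from rfl, hω3, hone, Polynomial.aeval_algebraMap_apply]
    simp only [Polynomial.coe_aeval_eq_eval, map_one]
    ring
  have key2 : aeval ω h.derivative =
      algebraMap (ZMod 2) (AlgebraicClosure (ZMod 2)) (g₂.derivative.eval 1) := by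
    rw [← hc₂, derivative_comp]
    have hd : derivative (X ^ 2 + X : (ZMod 2)[X]) = 1 := by
      simp [derivative_X_pow]
      exact CharTwo.add_self_eq_zero 1
    rw [hd]
    have hv : aeval ω (X ^ 2 + X : (ZMod 2)[X]) = 1 := by
      simp only [map_add, map_pow, aeval_X]
      linear_combination hω - h2F
    rw [map_mul, map_one, one_mul, aeval_comp, hv, hone,
      Polynomial.aeval_algebraMap_apply]
    simp only [Polynomial.coe_aeval_eq_eval]
  have hall : ∀ c : ZMod 2, c = 0 ∨ c = 1 := by decide
  have hz : aeval ω h.derivative = 0 := by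
    rcases hall (g₁.derivative.eval 1) with h1 | h1
    · rw [key1, h1, map_zero, zero_mul]
    · exfalso
      rcases hall (g₂.derivative.eval 1) with h2 | h2
      · rw [key2, h2, map_zero] at key1
        rw [h1, map_one, one_mul] at key1
        have hω0 : ω = 0 := by
          have := key1.symm
          exact pow_eq_zero_iff (by norm_num) |>.mp this
        rw [hω0] at hω
        simp at hω
      · rw [key2, h2, map_one] at key1
        rw [h1, map_one, one_mul] at key1
        rw [← key1] at hω
        have h0 : ω = 0 := by linear_combination hω - h2F
        rw [h0] at key1
        simp at key1
  rw [hz, zero_mul]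
end
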